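/- arXiv:2008.04089 — 6 statements merged into one kernel-verified Lean document; each statement's English description precedes it below -/
import Mathlib

section
/- Let x ∈ Y_{2t} and let O be the orbit of x under the cyclic shift group generated by α on X_{2t}. Then the intersection O ∩ Y_{2t} consists of exactly two distinct elements, namely x and α^{k_0}(x), where k_0 is the smallest positive integer such that α^{k_0} maps some element of O ∩ Y_{2t} back into O ∩ Y_{2t}. -/
/-- Cyclic shift by `k` of a word of length `n`: the `j`-th entry of the shifted
word is the `(j-k)`-th entry of the original. -/
def cshift (n k : ℕ) (x : ZMod n → ℤ) : ZMod n → ℤ := fun j => x (j - (k : ZMod n))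

/-- The orbit of `x` under the cyclic shift group. -/
def corbit (n : ℕ) (x : ZMod n → ℤ) : Set (ZMod n → ℤ) := {y | ∃ k : ℕ, y = cshift n k x}

/-- Membership in `Y_{2t}`: `ε_j = -ε_{2t-j-1}` for all `j` mod `2t`. -/
def inY (t : ℕ) (x : ZMod (2 * t) → ℤ) : Prop := ∀ j : ZMod (2 * t), x j = -x (-j - 1)

lemma cshift_zero (n : ℕ) (x : ZMod n → ℤ) : cshift n 0 x = x := by
  funext j; simp [cshift]

lemma cshift_add (n a b : ℕ) (x : ZMod n → ℤ) :
    cshift n a (cshift n b x) = cshift n (a + b) x := by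
  funext j
  simp only [cshift]
  congr 1
  push_cast
  ring

lemma cshift_mul (n m q : ℕ) (x : ZMod n → ℤ) (h : cshift n m x = x) :
    cshift n (q * m) x = x := by
  induction q with
  | zero => simpa using cshift_zero n x
  | succ q ih =>
      have h2 : cshift n (m + q * m) x = x := by
        rw [← cshift_add, ih, h]
      have e : (q + 1) * m = m + q * m := by ring
      rwa [e]

lemma inY_cshift_iff (t k : ℕ) (x : ZMod (2 * t) → ℤ) (hxY : inY t x) :
    inY t (cshift (2 * t) k x) ↔ cshift (2 * t) (2 * k) x = x := by
  constructor
  · intro h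
    funext j
    have h1 := h (j - (k : ZMod (2 * t)))
    simp only [cshift] at h1 ⊢
    have e1 : (j - (k : ZMod (2 * t))) - k = j - ((2 * k : ℕ) : ZMod (2 * t)) := by
      push_cast; ring
    have e2 : (-(j - (k : ZMod (2 * t))) - 1) - k = -j - 1 := by ring
    rw [e1, e2] at h1
    rw [h1, ← hxY j]
  · intro h j
    simp only [cshift]
    have h1 : x ((j + (k : ZMod (2 * t))) - ((2 * k : ℕ) : ZMod (2 * t)))
        = x (j + (k : ZMod (2 * t))) := congrFun h _
    have e1 : (j + (k : ZMod (2 * t))) - ((2 * k : ℕ) : ZMod (2 * t)) = j - k := by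
      push_cast; ring
    rw [e1] at h1
    rw [h1, hxY (j + k)]
    have e2 : (-(j + (k : ZMod (2 * t))) - 1) = (-j - 1) - k := by ring
    rw [e2]

lemma odd_no_period (t k : ℕ) (x : ZMod (2 * t) → ℤ) (hx : ∀ j, x j = 1 ∨ x j = -1)
    (hxY : inY t x) (hk : Odd k) (h : cshift (2 * t) k x = x) : False := by
  obtain ⟨c, hc⟩ := hk
  set j : ZMod (2 * t) := ((c : ℕ) : ZMod (2 * t)) with hj
  have hkc : (k : ZMod (2 * t)) = 2 * j + 1 := by
    rw [hj, hc]; push_cast; ring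
  have hper : x (j - (k : ZMod (2 * t))) = x j := congrFun h j
  have e : j - (k : ZMod (2 * t)) = -j - 1 := by rw [hkc]; ring
  rw [e] at hper
  have hY := hxY j
  rw [hper] at hY
  rcases hx j with h1 | h1 <;> omega

/-- Let `x ∈ Y_{2t}` and let `O` be its orbit under the cyclic
shift group. If `k₀` is the smallest positive integer such that the shift by
`k₀` maps some element of `O ∩ Y_{2t}` back into `O ∩ Y_{2t}`, then
`O ∩ Y_{2t}` consists of exactly the two distinct elements `x` and
`α^{k₀}(x)`. -/
theorem orbit_inter_Y_two_elements (t : ℕ) (ht : 1 ≤ t) (x : ZMod (2 * t) → ℤ)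
    (hx : ∀ j, x j = 1 ∨ x j = -1) (hxY : inY t x) (k₀ : ℕ)
    (hk₀ : IsLeast {k : ℕ | 0 < k ∧
      ∃ x' ∈ corbit (2 * t) x ∩ {y | inY t y}, cshift (2 * t) k x' ∈ corbit (2 * t) x ∩ {y | inY t y}} k₀) :
    corbit (2 * t) x ∩ {y | inY t y} = {x, cshift (2 * t) k₀ x} ∧ cshift (2 * t) k₀ x ≠ x := by
  obtain ⟨⟨hk₀pos, x', ⟨⟨a, ha⟩, hx'Y⟩, ⟨b, hb⟩, hsY⟩, hmin⟩ := hk₀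
  -- step 1 : cshift (2*(k₀)) x = x
  have hA : cshift (2 * t) (2 * a) x = x := (inY_cshift_iff t a x hxY).1 (ha ▸ hx'Y)
  have hKA : cshift (2 * t) (2 * (k₀ + a)) x = x := by
    apply (inY_cshift_iff t (k₀ + a) x hxY).1
    have e : cshift (2 * t) k₀ x' = cshift (2 * t) (k₀ + a) x := by rw [ha, cshift_add]
    rwa [e] at hsY
  have hK : cshift (2 * t) (2 * k₀) x = x := by
    have h1 : cshift (2 * t) (2 * k₀) (cshift (2 * t) (2 * a) x)
        = cshift (2 * t) (2 * k₀ + 2 * a) x := cshift_add _ _ _ _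
    rw [hA] at h1
    rw [h1, show 2 * k₀ + 2 * a = 2 * (k₀ + a) from by ring, hKA]
  -- step 2 : minimality restated
  have hmin' : ∀ m, 0 < m → cshift (2 * t) (2 * m) x = x → k₀ ≤ m := by
    intro m hm hper
    apply hmin
    exact ⟨hm, x, ⟨⟨0, (cshift_zero _ x).symm⟩, hxY⟩, ⟨m, rfl⟩,
      (inY_cshift_iff t m x hxY).2 hper⟩
  -- step 3 : cshift k₀ x ≠ x
  have hne : cshift (2 * t) k₀ x ≠ x := by
    intro hEq
    rcases Nat.even_or_odd k₀ with ⟨m, hm⟩ | hodd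
    · have hm0 : 0 < m := by omega
      have hper : cshift (2 * t) (2 * m) x = x := by
        rw [show 2 * m = k₀ from by omega]; exact hEq
      have := hmin' m hm0 hper
      omega
    · exact odd_no_period t k₀ x hx hxY hodd hEq
  refine ⟨?_, hne⟩
  ext y
  simp only [Set.mem_inter_iff, Set.mem_setOf_eq, Set.mem_insert_iff, Set.mem_singleton_iff]
  constructor
  · rintro ⟨⟨a', ha'⟩, hyY⟩
    have hA' : cshift (2 * t) (2 * a') x = x := (inY_cshift_iff t a' x hxY).1 (ha' ▸ hyY)
    set r := a' % k₀ with hr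
    set q := a' / k₀ with hq
    have hdiv : k₀ * q + r = a' := Nat.div_add_mod a' k₀
    have hrlt : r < k₀ := Nat.mod_lt _ hk₀pos
    have hQ : cshift (2 * t) (q * (2 * k₀)) x = x := cshift_mul _ _ q x hK
    have hR : cshift (2 * t) (2 * r) x = x := by
      have h1 : cshift (2 * t) (2 * r + q * (2 * k₀)) x = x := by
        rw [show 2 * r + q * (2 * k₀) = 2 * (k₀ * q + r) from by ring, hdiv, hA']
      rwa [← cshift_add (2 * t) (2 * r) (q * (2 * k₀)) x, hQ] at h1
    have hr0 : r = 0 := by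
      by_contra hr0
      have := hmin' r (Nat.pos_of_ne_zero hr0) hR
      omega
    have hy : y = cshift (2 * t) (q * k₀) x := by
      rw [ha', show a' = q * k₀ from by rw [mul_comm]; omega]
    rcases Nat.even_or_odd q with ⟨u, hu⟩ | ⟨u, hu⟩
    · left
      rw [hy, show q * k₀ = u * (2 * k₀) from by rw [hu]; ring]
      exact cshift_mul _ _ u x hK
    · right
      rw [hy, show q * k₀ = k₀ + u * (2 * k₀) from by rw [hu]; ring,
        ← cshift_add (2 * t) k₀ (u * (2 * k₀)) x, cshift_mul _ _ u x hK]
  · rintro (hy | hy) <;> rw [hy]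
    · exact ⟨⟨0, (cshift_zero _ x).symm⟩, hxY⟩
    · exact ⟨⟨k₀, rfl⟩, (inY_cshift_iff t k₀ x hxY).2 hK⟩
end

section
/- Let x ∈ Y_{2t} and let k_0 be the minimal positive integer k ≤ t such that α^k(x') ∈ Y_{2t} for some x' in the α-orbit of x intersected with Y_{2t}. Then α^{k_0}(x) ≠ x. -/
/-- Let `x ∈ Y_{2t}` and let `k₀` be the minimal positive integer
`k ≤ t` such that the shift by `k` of some element of (orbit of `x`) ∩ `Y_{2t}`
lies in `Y_{2t}`. Then `α^{k₀}(x) ≠ x`. -/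
theorem shift_k0_ne_self (t : ℕ) (ht : 1 ≤ t) (x : ZMod (2 * t) → ℤ)
    (hx : ∀ j, x j = 1 ∨ x j = -1) (hxY : inY t x) (k₀ : ℕ)
    (hk₀ : IsLeast {k : ℕ | 0 < k ∧ k ≤ t ∧
      ∃ x' ∈ corbit (2 * t) x ∩ {y | inY t y}, cshift (2 * t) k x' ∈ {y | inY t y}} k₀) :
    cshift (2 * t) k₀ x ≠ x := by
  intro h
  have hper : ∀ j : ZMod (2 * t), x (j - (k₀ : ZMod (2 * t))) = x j :=
    fun j => congrFun h j
  have hk0pos := hk₀.1.1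
  have hk0le := hk₀.1.2.1
  rcases Nat.even_or_odd k₀ with ⟨u, hu⟩ | ⟨n, hn⟩
  · -- even case: k₀ = u + u, shift by u also preserves Y, contradicting minimality
    have hc : (k₀ : ZMod (2 * t)) = (u : ZMod (2 * t)) + u := by
      rw [hu]; push_cast; ring
    have hmem : u ∈ {k : ℕ | 0 < k ∧ k ≤ t ∧
        ∃ x' ∈ corbit (2 * t) x ∩ {y | inY t y},
          cshift (2 * t) k x' ∈ {y | inY t y}} := by
      refine ⟨by omega, by omega, x, ⟨⟨0, ?_⟩, hxY⟩, ?_⟩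
      · funext j; simp [cshift]
      · intro j
        show x (j - (u : ZMod (2 * t))) = -x (-j - 1 - (u : ZMod (2 * t)))
        have h1 := hxY (j - (u : ZMod (2 * t)))
        have h2 := hper (-(j - (u : ZMod (2 * t))) - 1)
        rw [h1, ← h2, hc]
        ring_nf
    have := hk₀.2 hmem
    omega
  · -- odd case: find a fixed index forcing x a = 0
    set a : ZMod (2 * t) := -((n : ZMod (2 * t)) + 1) with ha
    have hc : (k₀ : ZMod (2 * t)) = (n : ZMod (2 * t)) + n + 1 := by
      rw [hn]; push_cast; ring
    have h1 := hxY a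
    have h2 := hper (-a - 1)
    have harg : -a - 1 - (k₀ : ZMod (2 * t)) = a := by
      rw [ha, hc]; ring
    rw [harg] at h2
    rw [← h2] at h1
    rcases hx a with h3 | h3 <;> omega
end

section
/- A word x ∈ Y_{2t} is primitive (not a power of a strictly shorter word under concatenation) if and only if k_0 = t, where k_0 is the minimal positive integer k such that the cyclic shift by k maps the set (orbit of x) ∩ Y_{2t} into itself. -/
/-- A word of length `n` is nonprimitive if it is the concatenation of `s`
copies of a word of length `n/s`, for `s` a proper divisor of `n` (a divisor
other than `1` and `n`); equivalently it is periodic with period `n/s`. -/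
def Nonprimitive (n : ℕ) (x : ZMod n → ℤ) : Prop :=
  ∃ s : ℕ, s ∣ n ∧ s ≠ 1 ∧ s ≠ n ∧ ∀ j : ZMod n, x (j + ((n / s : ℕ) : ZMod n)) = x j

namespace Stmt6Aux

/-- `x` is periodic with period `p`. -/
def per (t : ℕ) (x : ZMod (2 * t) → ℤ) (p : ℕ) : Prop :=
  ∀ j : ZMod (2 * t), x (j + (p : ZMod (2 * t))) = x j

lemma per_add {t : ℕ} {x : ZMod (2 * t) → ℤ} {a b : ℕ}
    (ha : per t x a) (hb : per t x b) : per t x (a + b) := by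
  intro j
  have : ((a + b : ℕ) : ZMod (2 * t)) = (a : ZMod (2 * t)) + b := by push_cast; ring
  rw [this, ← add_assoc, hb (j + a), ha j]

lemma per_mul {t : ℕ} {x : ZMod (2 * t) → ℤ} {a : ℕ} (ha : per t x a) (q : ℕ) :
    per t x (q * a) := by
  induction q with
  | zero => intro j; simp
  | succ n ih =>
      have : (n + 1) * a = n * a + a := by ring
      rw [this]; exact per_add ih ha

lemma per_two_t {t : ℕ} (x : ZMod (2 * t) → ℤ) : per t x (2 * t) := by
  intro j; rw [ZMod.natCast_self, add_zero]

/-- inY of a shifted word is equivalent to periodicity by twice the shift. -/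
lemma inY_shift_iff {t : ℕ} {x : ZMod (2 * t) → ℤ} (hxY : inY t x) (m : ℕ) :
    inY t (cshift (2 * t) m x) ↔ per t x (2 * m) := by
  have cast2m : ((2 * m : ℕ) : ZMod (2 * t)) = (m : ZMod (2 * t)) + m := by
    push_cast; ring
  constructor
  · intro h j
    have h1 := h (-j - 1 - (m : ZMod (2 * t)))
    simp only [cshift] at h1
    -- h1 : x (-j - 1 - m - m) = -x (-(-j-1-m) - 1 - m)
    have h2 := hxY (-j - 1 - (m : ZMod (2 * t)) - (m : ZMod (2 * t)))
    -- h2 : x (-j-1-m-m) = -x (-(-j-1-m-m) - 1)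
    have e1 : -(-j - 1 - (m : ZMod (2 * t))) - 1 - m = j := by ring
    have e2 : -(-j - 1 - (m : ZMod (2 * t)) - m) - 1 = j + (m + m) := by ring
    rw [e1] at h1
    rw [e2] at h2
    rw [cast2m]
    have := h1.symm.trans h2
    have := neg_injective this
    exact this.symm
  · intro hp j
    simp only [cshift]
    have h2 := hxY (j - (m : ZMod (2 * t)))
    -- h2 : x (j - m) = -x (-(j - m) - 1)
    have hpj := hp (-j - 1 - (m : ZMod (2 * t)))
    rw [cast2m] at hpj
    have e3 : -j - 1 - (m : ZMod (2 * t)) + (m + m) = -(j - m) - 1 := by ring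
    rw [e3] at hpj
    rw [h2, hpj]

lemma cshift_cshift {t : ℕ} (x : ZMod (2 * t) → ℤ) (k m : ℕ) :
    cshift (2 * t) k (cshift (2 * t) m x) = cshift (2 * t) (k + m) x := by
  funext j
  simp only [cshift]
  congr 1
  push_cast
  ring

/-- The shift-condition on orbit ∩ Y reduces to periodicity `2k`. -/
lemma cond_iff {t : ℕ} {x : ZMod (2 * t) → ℤ} (hxY : inY t x) (k : ℕ) :
    (∀ x' ∈ corbit (2 * t) x ∩ {y | inY t y},
        cshift (2 * t) k x' ∈ corbit (2 * t) x ∩ {y | inY t y}) ↔ per t x (2 * k) := by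
  constructor
  · intro h
    have hx0 : x ∈ corbit (2 * t) x ∩ {y | inY t y} := by
      refine ⟨⟨0, ?_⟩, hxY⟩
      funext j; simp [cshift]
    have h2 := (h x hx0).2
    exact (inY_shift_iff hxY k).mp h2
  · rintro hp x' ⟨⟨m, rfl⟩, hY⟩
    rw [cshift_cshift]
    have hm : per t x (2 * m) := (inY_shift_iff hxY m).mp hY
    have hkm : per t x (2 * (k + m)) := by
      have := per_add hp hm
      have e : 2 * (k + m) = 2 * k + 2 * m := by ring
      rw [e]; exact this
    exact ⟨⟨k + m, rfl⟩, (inY_shift_iff hxY (k + m)).mpr hkm⟩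

end Stmt6Aux

open Stmt6Aux in
/-- A word `x ∈ Y_{2t}` is primitive iff `k₀ = t`, where `k₀` is
the minimal positive integer `k` such that the shift by `k` maps the set
(orbit of `x`) ∩ `Y_{2t}` into itself. -/
theorem primitive_iff_k0_eq_t (t : ℕ) (ht : 1 ≤ t) (x : ZMod (2 * t) → ℤ)
    (hx : ∀ j, x j = 1 ∨ x j = -1) (hxY : inY t x) (k₀ : ℕ)
    (hk₀ : IsLeast {k : ℕ | 0 < k ∧
      ∀ x' ∈ corbit (2 * t) x ∩ {y | inY t y},
        cshift (2 * t) k x' ∈ corbit (2 * t) x ∩ {y | inY t y}} k₀) :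
    ¬Nonprimitive (2 * t) x ↔ k₀ = t := by
  classical
  have h2t : 0 < 2 * t := by omega
  -- Reduce the hypothesis on k₀
  have hk1 : 0 < k₀ ∧ per t x (2 * k₀) :=
    ⟨hk₀.1.1, (cond_iff hxY k₀).mp hk₀.1.2⟩
  have hk2 : ∀ k : ℕ, 0 < k → per t x (2 * k) → k₀ ≤ k := by
    intro k h1 h2
    exact hk₀.2 ⟨h1, (cond_iff hxY k).mpr h2⟩
  -- the minimal positive period d
  have hex : ∃ p, 0 < p ∧ per t x p := ⟨2 * t, h2t, per_two_t x⟩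
  set d := Nat.find hex with hd_def
  have hd : 0 < d ∧ per t x d := Nat.find_spec hex
  have hdvd : ∀ p : ℕ, per t x p → d ∣ p := by
    intro p hp
    have hr : per t x (p % d) := by
      intro j
      have hmul : per t x (d * (p / d)) := by
        have := per_mul hd.2 (p / d)
        have e : p / d * d = d * (p / d) := by ring
        rw [e] at this; exact this
      have h1 := hmul (j + ((p % d : ℕ) : ZMod (2 * t)))
      have h2 := hp j
      have e : (j + ((p % d : ℕ) : ZMod (2 * t))) + ((d * (p / d) : ℕ) : ZMod (2 * t))
          = j + ((p : ℕ) : ZMod (2 * t)) := by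
        push_cast
        have : (d : ZMod (2 * t)) * (p / d : ℕ) + (p % d : ℕ) = (p : ZMod (2 * t)) := by
          have hnat : d * (p / d) + p % d = p := Nat.div_add_mod p d
          calc (d : ZMod (2 * t)) * (p / d : ℕ) + (p % d : ℕ)
              = ((d * (p / d) + p % d : ℕ) : ZMod (2 * t)) := by push_cast; ring
            _ = (p : ZMod (2 * t)) := by rw [hnat]
        rw [← this]; ring
      rw [e] at h1
      rw [h2] at h1
      exact h1.symm
    by_contra hcon
    have hpos : 0 < p % d := by
      rcases Nat.eq_zero_or_pos (p % d) with h0 | h0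
      · exact (hcon (Nat.dvd_of_mod_eq_zero h0)).elim
      · exact h0
    have hlt : p % d < d := Nat.mod_lt _ hd.1
    exact Nat.find_min hex hlt ⟨hpos, hr⟩
  have hd2t : d ∣ 2 * t := hdvd (2 * t) (per_two_t x)
  -- d ≠ 1
  have hd1 : d ≠ 1 := by
    intro h1
    have hp1 : per t x 1 := by rw [← h1]; exact hd.2
    have ha := hp1 (-1)
    simp only [Nat.cast_one] at ha
    have e : (-1 : ZMod (2 * t)) + 1 = 0 := by ring
    rw [e] at ha
    have hb := hxY 0
    have e2 : -(0 : ZMod (2 * t)) - 1 = -1 := by ring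
    rw [e2] at hb
    rw [← ha] at hb
    rcases hx 0 with h | h <;> omega
  -- Nonprimitive from d ≠ 2t
  have hnp_of : d ≠ 2 * t → Nonprimitive (2 * t) x := by
    intro hne
    refine ⟨2 * t / d, Nat.div_dvd_of_dvd hd2t, ?_, ?_, ?_⟩
    · intro hs1
      have := Nat.mul_div_cancel' hd2t
      rw [hs1, Nat.mul_one] at this
      exact hne this
    · intro hsn
      have hmc := Nat.mul_div_cancel' hd2t
      rw [hsn] at hmc
      have : d = 1 := by
        have := Nat.eq_of_mul_eq_mul_right h2t (by linarith [hmc] : d * (2 * t) = 1 * (2 * t))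
        exact this
      exact hd1 this
    · have e : 2 * t / (2 * t / d) = d := Nat.div_div_self hd2t (by omega)
      rw [e]
      exact hd.2
  -- Nonprimitive gives d ≤ t
  have hof_np : Nonprimitive (2 * t) x → d ≤ t := by
    rintro ⟨s, hs, hs1, hsn, hper⟩
    have hs0 : 0 < s := by
      rcases Nat.eq_zero_or_pos s with h | h
      · exfalso; rw [h] at hs; have := Nat.eq_zero_of_zero_dvd hs; omega
      · exact h
    have hs2 : 2 ≤ s := by omega
    have hsle : s ≤ 2 * t := Nat.le_of_dvd h2t hs
    have hppos : 0 < 2 * t / s := Nat.div_pos hsle hs0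
    have hple : 2 * t / s ≤ t := by
      calc 2 * t / s ≤ 2 * t / 2 := Nat.div_le_div_left hs2 (by norm_num)
        _ = t := by omega
    have hdp : d ∣ 2 * t / s := hdvd _ hper
    have := Nat.le_of_dvd hppos hdp
    omega
  -- odd t impossibility of per t x t
  have hodd_imp : Odd t → ¬ per t x t := by
    rintro ⟨u, hu⟩ hpt
    set c : ZMod (2 * t) := (u : ZMod (2 * t)) with hc
    have key : -c - 1 = c + (t : ZMod (2 * t)) := by
      have hz : ((2 * t : ℕ) : ZMod (2 * t)) = 0 := ZMod.natCast_self _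
      have hsum : ((u + u + 1 + t : ℕ) : ZMod (2 * t)) = 0 := by
        have : u + u + 1 + t = 2 * t := by omega
        rw [this, hz]
      have : c + c + 1 + (t : ZMod (2 * t)) = 0 := by
        rw [hc]
        calc (u : ZMod (2 * t)) + u + 1 + t
            = ((u + u + 1 + t : ℕ) : ZMod (2 * t)) := by push_cast; ring
          _ = 0 := hsum
      linear_combination -this
    have h1 := hxY c
    rw [key] at h1
    have h2 := hpt c
    rw [h2] at h1
    rcases hx c with h | h <;> omega
  constructor
  · -- primitive → k₀ = t
    intro hprim
    have hdeq : d = 2 * t := by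
      by_contra hne
      exact hprim (hnp_of hne)
    have hub : k₀ ≤ t := hk2 t (by omega) (per_two_t x)
    have hlb : t ≤ k₀ := by
      have hdd : d ∣ 2 * k₀ := hdvd _ hk1.2
      rw [hdeq] at hdd
      have : t ∣ k₀ := by
        rcases hdd with ⟨c, hc⟩
        exact ⟨c, by linarith⟩
      exact Nat.le_of_dvd hk1.1 this
    omega
  · -- k₀ = t → primitive
    intro hkt hnp
    have hdt : d ≤ t := hof_np hnp
    rcases lt_or_eq_of_le hdt with hlt | heq
    · have hkd : k₀ ≤ d := by
        apply hk2 d hd.1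
        have e : 2 * d = d + d := by ring
        rw [e]
        exact per_add hd.2 hd.2
      omega
    · -- d = t
      have hpt : per t x t := by
        have h := hd.2
        rw [heq] at h
        exact h
      rcases Nat.even_or_odd t with hev | hod
      · rcases hev with ⟨u, hu⟩
        have hu0 : 0 < u := by omega
        have hkd : k₀ ≤ u := by
          apply hk2 u hu0
          have e : 2 * u = t := by omega
          rw [e]
          exact hpt
        omega
      · exact hodd_imp hod hpt
end

section
/- In G = Z/2 * Z/3, if y is an (ab)-word and x^s = y for some positive integer s and x ∈ G, then x is itself an (ab)-word and s times the word length of x equals the word length of y. -/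
/-!
By the normal form theorem for free products, every nontrivial element of `ℤ/2 ∗ ℤ/3` is a
unique reduced word alternating between the two factors; its word length is the length of that
reduced word, and the `(ab)`-words are exactly the reduced words that begin in `ℤ/2` and end in
`ℤ/3`.

If a reduced word `w` begins and ends in different factors, then `w ^ s` is the `s`-fold
concatenation of `w`, hence reduced of length `s * |w|`. If `w` begins and ends in the same
factor, write `w = p u q` with `p, q` in that factor: either `q p = 1` and `w ^ s = p u ^ s p⁻¹`,
or `w ^ (n + 1) = p (u (q p)) ^ n u q` is reduced as written. By induction on the length, every
power of such a `w` is trivial or again begins and ends in one factor, so it is no `(ab)`-word.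
-/

noncomputable section

/-- The free product `G = ℤ/2 * ℤ/3`. -/
abbrev G : Type := Monoid.Coprod (Multiplicative (ZMod 2)) (Multiplicative (ZMod 3))

/-- The generator of the `ℤ/2` factor. -/
def a : G := Monoid.Coprod.inl (Multiplicative.ofAdd (1 : ZMod 2))

/-- The generator of the `ℤ/3` factor. -/
def b : G := Monoid.Coprod.inr (Multiplicative.ofAdd (1 : ZMod 3))

/-- Word length of `g ∈ G` with respect to the generating set `{a, b, b⁻¹}`. -/
def wordLength (g : G) : ℕ :=
  sInf {n | ∃ l : List G, l.length = n ∧ (∀ x ∈ l, x = a ∨ x = b ∨ x = b⁻¹) ∧ l.prod = g}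

/-- `g` is an `(ab)`-word: `g = a b^{ε_1} a b^{ε_2} ⋯ a b^{ε_t}` with each `ε_i = ±1`. -/
def IsAbWord (g : G) : Prop :=
  ∃ t : ℕ, 0 < t ∧ ∃ ε : Fin t → ℤ, (∀ i, ε i = 1 ∨ ε i = -1) ∧
    g = (List.ofFn fun i : Fin t => a * b ^ ε i).prod

/-- Minimal word length in the conjugacy class of `g`. -/
def classLength (g : G) : ℕ := sInf {n | ∃ h : G, IsConj g h ∧ wordLength h = n}

/-- Minimal word length over representatives of a conjugacy class. -/
def conjClassLength (c : ConjClasses G) : ℕ :=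
  sInf {n | ∃ g : G, ConjClasses.mk g = c ∧ wordLength g = n}

namespace Monoid.CoprodI

variable {ι : Type*} {M : ι → Type*}

namespace Word

variable [∀ i, Monoid (M i)] [∀ i, DecidableEq (M i)]

theorem length_toList_rcons_le {i : ι} (p : Pair M i) :
    (rcons p).toList.length ≤ p.tail.toList.length + 1 := by
  unfold rcons; split_ifs <;> simp

theorem length_toList_tail_le_rcons {i : ι} (p : Pair M i) :
    p.tail.toList.length ≤ (rcons p).toList.length := by
  unfold rcons; split_ifs <;> simp

variable [DecidableEq ι]

theorem length_toList_of_smul_le {i : ι} (m : M i) (w : Word M) :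
    (of m • w).toList.length ≤ w.toList.length + 1 := by
  rw [of_smul_def]
  refine (length_toList_rcons_le _).trans (Nat.add_le_add_right ?_ 1)
  calc (equivPair i w).tail.toList.length ≤ (rcons (equivPair i w)).toList.length :=
        length_toList_tail_le_rcons _
    _ = w.toList.length := by rw [← equivPair_symm, Equiv.symm_apply_apply]

theorem length_toList_equiv_of_mul_le {i : ι} (m : M i) (g : CoprodI M) :
    (equiv (of m * g)).toList.length ≤ (equiv g).toList.length + 1 := by
  show ((of m * g) • empty).toList.length ≤ (g • empty).toList.length + 1
  rw [mul_smul]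
  exact length_toList_of_smul_le m _

end Word

namespace NeWord

section Monoid

variable [∀ i, Monoid (M i)]

theorem eq_of_prod_eq {i j k l : ι} (w : NeWord M i j) (w' : NeWord M k l)
    (h : w.prod = w'.prod) : i = k ∧ j = l ∧ w.toList = w'.toList := by
  classical
  have hw : w.toList = w'.toList := congrArg Word.toList (Word.equiv.symm.injective h)
  have hhead := w.toList_head?
  have hlast := w.toList_getLast?
  rw [hw, w'.toList_head?, Option.some_inj] at hhead
  rw [hw, w'.toList_getLast?, Option.some_inj] at hlast
  exact ⟨(congrArg Sigma.fst hhead).symm, (congrArg Sigma.fst hlast).symm, hw⟩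

theorem prod_ne_one {i j : ι} (w : NeWord M i j) : w.prod ≠ 1 := by
  classical
  intro h
  have : w.toWord = Word.empty := Word.equiv.symm.injective (h.trans Word.prod_empty.symm)
  exact w.toList_ne_nil (congrArg Word.toList this)

theorem exists_prod_eq {g : CoprodI M} (hg : g ≠ 1) :
    ∃ (i j : ι) (w : NeWord M i j), w.prod = g := by
  classical
  have hne : Word.equiv g ≠ Word.empty := fun h =>
    hg (by rw [← Word.equiv.symm_apply_apply g, h]; exact Word.prod_empty)
  obtain ⟨i, j, w, hw⟩ := of_word _ hne
  exact ⟨i, j, w, by rw [prod, hw]; exact Word.equiv.symm_apply_apply g⟩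

theorem exists_pow_mul_prod {i j l : ι} (w : NeWord M i j) (hij : i ≠ j) (v : NeWord M i l)
    (n : ℕ) : ∃ v' : NeWord M i l, v'.prod = w.prod ^ n * v.prod ∧
      v'.toList.length = n * w.toList.length + v.toList.length := by
  induction n with
  | zero => exact ⟨v, by simp, by simp⟩
  | succ n ih =>
    obtain ⟨v', hprod, hlen⟩ := ih
    exact ⟨append w hij.symm v', by rw [append_prod, hprod, pow_succ', mul_assoc],
      by simp only [toList, List.length_append, hlen]; ring⟩

theorem exists_pow_prod {i j : ι} (w : NeWord M i j) (hij : i ≠ j) {n : ℕ} (hn : n ≠ 0) :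
    ∃ w' : NeWord M i j, w'.prod = w.prod ^ n ∧ w'.toList.length = n * w.toList.length := by
  obtain ⟨n, rfl⟩ := Nat.exists_eq_add_one_of_ne_zero hn
  obtain ⟨w', hprod, hlen⟩ := w.exists_pow_mul_prod hij w n
  exact ⟨w', by rw [hprod, pow_succ], by rw [hlen]; ring⟩

theorem exists_append_prod_eq_of_mul {i j k l : ι} (w₁ : NeWord M i j) (hne : j ≠ k)
    (w₂ : NeWord M k l) : ∃ (p : M i) (_ : p ≠ 1) (m : ι) (_ : i ≠ m) (v : NeWord M m l),
      (append w₁ hne w₂).prod = of p * v.prod ∧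
        v.toList.length < (append w₁ hne w₂).toList.length := by
  induction w₁ generalizing k l with
  | singleton x hx => exact ⟨x, hx, _, hne, w₂, by simp [append_prod], by simp⟩
  | append u h u' ih _ =>
    obtain ⟨p, hp, m, him, v, hv, hlen⟩ := ih h (append u' hne w₂)
    refine ⟨p, hp, m, him, v, ?_, ?_⟩
    · simp only [append_prod] at hv ⊢
      rw [mul_assoc, hv]
    · simp only [toList, List.length_append] at hlen ⊢
      omega

theorem exists_append_prod_eq_mul_of {i j k l : ι} (w₁ : NeWord M i j) (hne : j ≠ k)
    (w₂ : NeWord M k l) : ∃ (q : M l) (_ : q ≠ 1) (m : ι) (_ : m ≠ l) (u : NeWord M i m),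
      (append w₁ hne w₂).prod = u.prod * of q ∧
        u.toList.length < (append w₁ hne w₂).toList.length := by
  induction w₂ generalizing i j with
  | singleton x hx => exact ⟨x, hx, _, hne, w₁, by simp [append_prod], by simp⟩
  | append u h u' _ ih =>
    obtain ⟨q, hq, m, hml, v, hv, hlen⟩ := ih (append w₁ hne u) h
    refine ⟨q, hq, m, hml, v, ?_, ?_⟩
    · simp only [append_prod] at hv ⊢
      rw [← mul_assoc, hv]
    · simp only [toList, List.length_append] at hlen ⊢
      omega

theorem exists_append_prod_eq_of_mul_mul_of {i j k : ι} (w₁ : NeWord M i j) (hne : j ≠ k)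
    (w₂ : NeWord M k i) : ∃ (p q : M i) (_ : p ≠ 1) (_ : q ≠ 1) (m m' : ι) (_ : i ≠ m)
      (_ : m' ≠ i) (u : NeWord M m m'), (append w₁ hne w₂).prod = of p * u.prod * of q ∧
        u.toList.length < (append w₁ hne w₂).toList.length := by
  obtain ⟨p, hp, m, him, v, hv, hvlen⟩ := exists_append_prod_eq_of_mul w₁ hne w₂
  cases v with
  | singleton _ _ => exact absurd rfl him
  | append v₁ hne' v₂ =>
    obtain ⟨q, hq, m', hmi, u, hu, hulen⟩ := exists_append_prod_eq_mul_of v₁ hne' v₂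
    exact ⟨p, q, hp, hq, m, m', him, hmi, u, by rw [hv, hu, mul_assoc], hulen.trans hvlen⟩

theorem exists_pow_succ_prod_eq {i k l : ι} {p q : M i} (hp : p ≠ 1) (hq : q ≠ 1)
    (hqp : q * p ≠ 1) (u : NeWord M k l) (hik : i ≠ k) (hli : l ≠ i) (n : ℕ) :
    ∃ w : NeWord M i i, w.prod = (of p * u.prod * of q) ^ (n + 1) := by
  obtain ⟨V, hV, -⟩ := exists_pow_mul_prod (append u hli (singleton (q * p) hqp)) hik.symm
    (append u hli (singleton q hq)) n
  refine ⟨append (singleton p hp) hik V, ?_⟩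
  rw [append_prod, hV, append_prod, append_prod, prod_singleton, prod_singleton,
    prod_singleton, map_mul]
  conv_rhs => rw [mul_assoc, pow_succ, ← mul_assoc, mul_pow_mul]
  simp only [mul_assoc]

end Monoid

section Group

variable [∀ i, Group (M i)]

theorem pow_prod_eq_one_or_exists {i j : ι} (w : NeWord M i j) (n : ℕ) :
    w.prod ^ n = 1 ∨ ∃ w' : NeWord M i j, w'.prod = w.prod ^ n := by
  induction hN : w.toList.length using Nat.strong_induction_on generalizing i j w with
  | _ N ih =>
    rcases eq_or_ne n 0 with rfl | hn
    · exact Or.inl (pow_zero _)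
    by_cases hij : i = j
    · subst hij
      cases w with
      | singleton x hx =>
        by_cases h : x ^ n = 1
        · left; rw [prod_singleton, ← map_pow, h, map_one]
        · right; exact ⟨singleton (x ^ n) h, by rw [prod_singleton, prod_singleton, map_pow]⟩
      | append w₁ hne w₂ =>
        obtain ⟨p, q, hp, hq, k, l, hik, hli, u, hu, hulen⟩ :=
          exists_append_prod_eq_of_mul_mul_of w₁ hne w₂
        rw [hu]
        by_cases hqp : q * p = 1
        · obtain rfl : q = p⁻¹ := eq_inv_of_mul_eq_one_left hqp
          rw [map_inv, conj_pow]
          rcases ih _ (hN ▸ hulen) u rfl with h | ⟨u', hu'⟩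
          · left; rw [h, mul_one, mul_inv_cancel]
          · right
            exact ⟨append (append (singleton p hp) hik u') hli (singleton p⁻¹ hq),
              by rw [append_prod, append_prod, prod_singleton, prod_singleton, hu', map_inv]⟩
        · obtain ⟨n, rfl⟩ := Nat.exists_eq_add_one_of_ne_zero hn
          exact Or.inr (exists_pow_succ_prod_eq hp hq hqp u hik hli n)
    · obtain ⟨w', hw', -⟩ := w.exists_pow_prod hij hn
      exact Or.inr ⟨w', hw'⟩

theorem eq_and_length_eq_of_pow_prod_eq {i j k l : ι} (w : NeWord M i j) (w' : NeWord M k l)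
    (hkl : k ≠ l) {n : ℕ} (hn : n ≠ 0) (h : w.prod ^ n = w'.prod) :
    i = k ∧ j = l ∧ w'.toList.length = n * w.toList.length := by
  by_cases hij : i = j
  · subst hij
    rcases w.pow_prod_eq_one_or_exists n with h1 | ⟨w'', hw''⟩
    · exact absurd (h ▸ h1) w'.prod_ne_one
    · obtain ⟨rfl, rfl, -⟩ := eq_of_prod_eq w'' w' (hw''.trans h)
      exact absurd rfl hkl
  · obtain ⟨v, hv, hlen⟩ := w.exists_pow_prod hij hn
    obtain ⟨rfl, rfl, hl⟩ := eq_of_prod_eq v w' (hv.trans h)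
    exact ⟨rfl, rfl, hl ▸ hlen⟩

end Group

end NeWord

end Monoid.CoprodI

open Monoid Monoid.CoprodI Monoid.CoprodI.NeWord

namespace G

-- `Factor false` is `ℤ/2`, generated by `a`; `Factor true` is `ℤ/3`, generated by `b`.
abbrev Factor : Bool → Type := fun i => Multiplicative (ZMod (cond i 3 2))

def toCoprodI : G ≃* CoprodI Factor :=
  MonoidHom.toMulEquiv
    (Coprod.lift (of (M := Factor) (i := false)) (of (M := Factor) (i := true)))
    (lift fun | false => Coprod.inl | true => Coprod.inr)
    (Coprod.hom_ext (MonoidHom.ext fun _ => lift_of _ _)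
      (MonoidHom.ext fun _ => lift_of _ _))
    (ext_hom _ _ fun | false => MonoidHom.ext fun _ => rfl | true => MonoidHom.ext fun _ => rfl)

theorem toCoprodI_a : toCoprodI a = of (i := false) (Multiplicative.ofAdd 1) := rfl

theorem toCoprodI_b : toCoprodI b = of (i := true) (Multiplicative.ofAdd 1) := rfl

theorem toCoprodI_symm_of_false {m : Factor false} (hm : m ≠ 1) :
    toCoprodI.symm (of m) = a := by
  have h2 : ∀ m : Multiplicative (ZMod 2), m ≠ 1 → m = Multiplicative.ofAdd 1 := by decide
  obtain rfl := h2 m hm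
  rw [MulEquiv.symm_apply_eq, toCoprodI_a]

theorem exists_toCoprodI_symm_of_true {m : Factor true} (hm : m ≠ 1) :
    ∃ ε : ℤ, (ε = 1 ∨ ε = -1) ∧ toCoprodI.symm (of m) = b ^ ε := by
  have h3 : ∀ m : Multiplicative (ZMod 3), m ≠ 1 →
      m = Multiplicative.ofAdd 1 ∨ m = (Multiplicative.ofAdd 1)⁻¹ := by decide
  obtain rfl | rfl := h3 m hm
  · exact ⟨1, Or.inl rfl, by rw [zpow_one, MulEquiv.symm_apply_eq, toCoprodI_b]⟩
  · exact ⟨-1, Or.inr rfl, by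
      rw [zpow_neg_one, MulEquiv.symm_apply_eq, map_inv, map_inv, toCoprodI_b]⟩

theorem exists_toCoprodI_b_zpow {ε : ℤ} (hε : ε = 1 ∨ ε = -1) :
    ∃ m : Factor true, m ≠ 1 ∧ toCoprodI (b ^ ε) = of m := by
  rcases hε with rfl | rfl
  · exact ⟨Multiplicative.ofAdd 1, by decide, by rw [zpow_one, toCoprodI_b]⟩
  · exact ⟨(Multiplicative.ofAdd 1)⁻¹, by decide, by rw [zpow_neg_one, map_inv, toCoprodI_b,
      map_inv]⟩

theorem toCoprodI_symm_of_mem_gens {i : Bool} {m : Factor i} (hm : m ≠ 1) :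
    toCoprodI.symm (of m) = a ∨ toCoprodI.symm (of m) = b ∨ toCoprodI.symm (of m) = b⁻¹ := by
  cases i with
  | false => exact Or.inl (toCoprodI_symm_of_false hm)
  | true =>
    obtain ⟨ε, rfl | rfl, h⟩ := exists_toCoprodI_symm_of_true hm
    · exact Or.inr (Or.inl (h.trans (zpow_one b)))
    · exact Or.inr (Or.inr (h.trans (zpow_neg_one b)))

theorem exists_toCoprodI_eq_of {x : G} (hx : x = a ∨ x = b ∨ x = b⁻¹) :
    ∃ (i : Bool) (m : Factor i), toCoprodI x = of m := by
  rcases hx with rfl | rfl | rfl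
  · exact ⟨false, _, toCoprodI_a⟩
  · exact ⟨true, _, toCoprodI_b⟩
  · exact ⟨true, _, by rw [map_inv, toCoprodI_b, ← map_inv]⟩

theorem length_toList_equiv_toCoprodI_le (l : List G)
    (hl : ∀ x ∈ l, x = a ∨ x = b ∨ x = b⁻¹) :
    (Word.equiv (toCoprodI l.prod)).toList.length ≤ l.length := by
  induction l with
  | nil => simp [Word.equiv]
  | cons x l ih =>
    obtain ⟨i, m, hm⟩ := exists_toCoprodI_eq_of (hl x List.mem_cons_self)
    have := ih fun y hy => hl y (List.mem_cons_of_mem _ hy)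
    rw [List.prod_cons, map_mul, hm, List.length_cons]
    exact (Word.length_toList_equiv_of_mul_le m _).trans (by omega)

theorem wordLength_eq {i j : Bool} (w : NeWord Factor i j) {g : G}
    (hg : w.prod = toCoprodI g) :
    wordLength g = w.toList.length := by
  have hmem : w.toList.length ∈ {n | ∃ l : List G, l.length = n ∧
      (∀ x ∈ l, x = a ∨ x = b ∨ x = b⁻¹) ∧ l.prod = g} := by
    refine ⟨w.toList.map fun σ => toCoprodI.symm (of σ.2), List.length_map _, ?_, ?_⟩
    · simp only [List.mem_map]
      rintro _ ⟨σ, hσ, rfl⟩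
      exact toCoprodI_symm_of_mem_gens (w.toWord.ne_one σ hσ)
    · have : (w.toList.map fun σ => toCoprodI.symm (of σ.2)) =
          (w.toList.map fun σ => of σ.2).map toCoprodI.symm := by
        rw [List.map_map]; rfl
      rw [this, ← map_list_prod, MulEquiv.symm_apply_eq, ← hg]
      rfl
  refine le_antisymm (Nat.sInf_le hmem) (le_csInf ⟨_, hmem⟩ ?_)
  rintro n ⟨l, rfl, hl, rfl⟩
  have hw : Word.equiv (toCoprodI l.prod) = w.toWord := by
    rw [← hg]; exact Word.equiv.apply_symm_apply w.toWord
  have := length_toList_equiv_toCoprodI_le l hl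
  rwa [hw] at this

theorem isAbWord_a_mul_b_zpow {ε : ℤ} (hε : ε = 1 ∨ ε = -1) : IsAbWord (a * b ^ ε) :=
  ⟨1, one_pos, fun _ => ε, fun _ => hε, by simp⟩

theorem isAbWord_a_mul_b_zpow_mul {ε : ℤ} (hε : ε = 1 ∨ ε = -1) {g : G} (hg : IsAbWord g) :
    IsAbWord (a * b ^ ε * g) := by
  obtain ⟨t, -, δ, hδ, rfl⟩ := hg
  exact ⟨t + 1, t.succ_pos, Fin.cons ε δ, Fin.cases hε hδ, by
    rw [List.ofFn_succ, List.prod_cons]; simp⟩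

theorem exists_neWord_of_isAbWord {g : G} (hg : IsAbWord g) :
    ∃ w : NeWord Factor false true, w.prod = toCoprodI g := by
  obtain ⟨t, ht, ε, hε, rfl⟩ := hg
  induction t with
  | zero => exact absurd ht (lt_irrefl 0)
  | succ t ih =>
    obtain ⟨m, hm, hbm⟩ := exists_toCoprodI_b_zpow (hε 0)
    let pair : NeWord Factor false true :=
      append (singleton (Multiplicative.ofAdd 1) (by decide)) Bool.false_ne_true (singleton m hm)
    have hpair : pair.prod = toCoprodI (a * b ^ ε 0) := by
      rw [map_mul, toCoprodI_a, hbm, append_prod, prod_singleton, prod_singleton]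
    rw [List.ofFn_succ, List.prod_cons]
    rcases Nat.eq_zero_or_pos t with rfl | ht'
    · exact ⟨pair, by rw [hpair, List.ofFn_zero, List.prod_nil, mul_one]⟩
    · obtain ⟨w, hw⟩ := ih ht' (fun i => ε i.succ) (fun i => hε i.succ)
      exact ⟨append pair Bool.false_ne_true.symm w, by rw [append_prod, hpair, hw, ← map_mul]⟩

theorem isAbWord_toCoprodI_symm (w : NeWord Factor false true) :
    IsAbWord (toCoprodI.symm w.prod) := by
  induction hN : w.toList.length using Nat.strong_induction_on generalizing w with
  | _ N ih =>
  cases w with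
  | append w₁ hne w₂ =>
    obtain ⟨p, hp, k, hk, v, hv, hvlen⟩ := exists_append_prod_eq_of_mul w₁ hne w₂
    obtain rfl : k = true := by simpa using hk.symm
    rw [hv, map_mul, toCoprodI_symm_of_false hp]
    cases v with
    | singleton q hq =>
      obtain ⟨ε, hε, hq'⟩ := exists_toCoprodI_symm_of_true hq
      rw [prod_singleton, hq']
      exact isAbWord_a_mul_b_zpow hε
    | append v₁ hne' v₂ =>
      obtain ⟨q, hq, k', hk', u, hu, hulen⟩ := exists_append_prod_eq_of_mul v₁ hne' v₂
      obtain rfl : k' = false := by simpa using hk'.symm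
      obtain ⟨ε, hε, hq'⟩ := exists_toCoprodI_symm_of_true hq
      rw [hu, map_mul, hq', ← mul_assoc]
      exact isAbWord_a_mul_b_zpow_mul hε (ih _ (by omega) u rfl)

theorem isAbWord_iff {g : G} :
    IsAbWord g ↔ ∃ w : NeWord Factor false true, w.prod = toCoprodI g :=
  ⟨exists_neWord_of_isAbWord, fun ⟨w, hw⟩ => by
    simpa [hw] using isAbWord_toCoprodI_symm w⟩

end G

/-- In `G = ℤ/2 * ℤ/3`, if `y` is an `(ab)`-word and `x^s = y` for
a positive integer `s`, then `x` is an `(ab)`-word and `s * ‖x‖ = ‖y‖`. -/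
theorem power_of_ab_word (x y : G) (s : ℕ) (hs : 0 < s) (hy : IsAbWord y)
    (hxy : x ^ s = y) :
    IsAbWord x ∧ s * wordLength x = wordLength y := by
  obtain ⟨w, hw⟩ := G.isAbWord_iff.mp hy
  have hx : G.toCoprodI x ≠ 1 := fun h =>
    w.prod_ne_one (by rw [hw, ← hxy, map_pow, h, one_pow])
  obtain ⟨i, j, v, hv⟩ := NeWord.exists_prod_eq hx
  obtain ⟨rfl, rfl, hlen⟩ := v.eq_and_length_eq_of_pow_prod_eq w Bool.false_ne_true hs.ne'
    (by rw [hv, ← map_pow, hxy, hw])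
  refine ⟨G.isAbWord_iff.mpr ⟨v, hv⟩, ?_⟩
  rw [G.wordLength_eq v hv, G.wordLength_eq w hw, hlen]
end
end

section
/- The number of conjugacy classes of G = Z/2 * Z/3 of length 2t equals (1/t) * sum over j from 1 to t of 2^(gcd(j,t)). -/
noncomputable section

/-!
Every element of `G = ℤ/2 * ℤ/3` has a unique normal form `b^p (a b^c₁) ⋯ (a b^cₖ) a^q` with
`cᵢ ∈ {1, 2}`, from which its word length can be read off. Cyclic reduction conjugates an element
either into a factor (length `≤ 1`) or onto an alternating word `(a b^c₁) ⋯ (a b^cₖ)`, whose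
cyclic sequence `(c₁, …, cₖ)` is a conjugacy invariant and whose length `2k` is minimal in its
class. Hence the classes of length `2t` correspond to the binary necklaces of length `t`, which
are counted by Burnside's lemma for the rotation action of `ℤ/t`.
-/

/-! ### Counting necklaces -/

section Necklaces

open AddAction

attribute [local instance] arrowAddAction

theorem ZMod.index_zmultiples_natCast (t j : ℕ) [NeZero t] :
    (AddSubgroup.zmultiples (j : ZMod t)).index = Nat.gcd t j := by
  have h := (AddSubgroup.zmultiples (j : ZMod t)).index_mul_card
  rw [Nat.card_zmultiples, ZMod.addOrderOf_coe _ (NeZero.ne t), Nat.card_zmod] at h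
  have hpos : 0 < t / t.gcd j :=
    Nat.div_pos (Nat.gcd_le_left _ (NeZero.pos t)) (Nat.gcd_pos_of_pos_left _ (NeZero.pos t))
  exact Nat.eq_of_mul_eq_mul_right hpos (h.trans (Nat.mul_div_cancel' (Nat.gcd_dvd_left t j)).symm)

section FixedPoints

variable {A B : Type*} [AddCommGroup A]

def arrowFixedByEquiv (g : A) : fixedBy (A → B) g ≃ (A ⧸ AddSubgroup.zmultiples g → B) := by
  have mem (F : A ⧸ AddSubgroup.zmultiples g → B) : F ∘ QuotientAddGroup.mk ∈ fixedBy (A → B) g :=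
    funext fun x => congrArg F (QuotientAddGroup.eq.2 (by simp))
  refine (Equiv.ofBijective (fun F => ⟨F ∘ QuotientAddGroup.mk, mem F⟩) ⟨?_, ?_⟩).symm
  · intro F F' h
    exact QuotientAddGroup.mk_surjective.injective_comp_right (congrArg Subtype.val h)
  · rintro ⟨F, hF⟩
    have hle : AddSubgroup.zmultiples g ≤ stabilizer A F := AddSubgroup.zmultiples_le.2 hF
    refine ⟨fun x => Quotient.liftOn' x F fun x y hxy => ?_, rfl⟩
    have : F (-(-x + y) + y) = F y := congrFun (hle (QuotientAddGroup.leftRel_apply.1 hxy)) y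
    simpa using this

theorem card_arrowFixedBy_zmod {t : ℕ} [NeZero t] [Finite B] (j : ℕ) :
    Nat.card (fixedBy (ZMod t → B) (j : ZMod t)) = Nat.card B ^ Nat.gcd t j := by
  rw [Nat.card_congr (arrowFixedByEquiv _), Nat.card_fun, ← AddSubgroup.index,
    ZMod.index_zmultiples_natCast]

end FixedPoints

theorem ZMod.sum_comp_val_eq_sum_Icc {M : Type*} [AddCommMonoid M] (t : ℕ) [NeZero t]
    (f : ℕ → M) (hf : f 0 = f t) : ∑ g : ZMod t, f g.val = ∑ j ∈ Finset.Icc 1 t, f j := by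
  obtain ⟨n, rfl⟩ : ∃ n, t = n + 1 := Nat.exists_eq_succ_of_ne_zero (NeZero.ne t)
  rw [show ∑ g : ZMod (n + 1), f g.val = ∑ j ∈ Finset.range (n + 1), f j from
      Fin.sum_univ_eq_sum_range f (n + 1), Finset.sum_range_succ', hf, ← Finset.sum_range_succ,
    Finset.range_eq_Ico, Finset.sum_Ico_add' f, Finset.Ico_add_one_right_eq_Icc, zero_add]

namespace Necklace

variable {α : Type*} {t : ℕ}

def toList (f : ZMod t → α) : List α := List.ofFn fun i : Fin t => f i.val

@[simp] theorem length_toList (f : ZMod t → α) : (toList f).length = t := List.length_ofFn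

theorem rotate_toList (f : ZMod t → α) (k : ℕ) :
    (toList f).rotate k = toList (-(k : ZMod t) +ᵥ f) := by
  refine List.ext_getElem (by simp) fun i _ _ => ?_
  simp only [toList, List.getElem_rotate, List.getElem_ofFn, List.length_ofFn]
  show f _ = f (-(-(k : ZMod t)) + i)
  rw [ZMod.natCast_mod, neg_neg, Nat.cast_add, add_comm]

variable [NeZero t]

theorem toList_injective : Function.Injective (toList : (ZMod t → α) → List α) := by
  intro f f' h
  funext x
  simpa using congrFun (List.ofFn_injective h) ⟨x.val, x.val_lt⟩

theorem isRotated_toList_iff {f f' : ZMod t → α} :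
    toList f ~r toList f' ↔ f ∈ orbit (ZMod t) f' := by
  constructor
  · rintro ⟨k, hk⟩
    rw [rotate_toList] at hk
    exact ⟨k, by simp [← toList_injective hk]⟩
  · rintro ⟨g, rfl⟩
    refine List.IsRotated.symm ⟨(-g).val, ?_⟩
    rw [rotate_toList, ZMod.natCast_zmod_val, neg_neg]

def orbitsEquivCycles :
    orbitRel.Quotient (ZMod t) (ZMod t → α) ≃ {c : Cycle α // c.length = t} := by
  refine Equiv.ofBijective (Quotient.lift (fun f => ⟨(toList f : Cycle α), by simp⟩)
    fun f f' h => Subtype.ext (Cycle.coe_eq_coe.2 (isRotated_toList_iff.2 h))) ⟨?_, ?_⟩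
  · rintro ⟨f⟩ ⟨f'⟩ h
    exact Quotient.sound (isRotated_toList_iff.1 (Cycle.coe_eq_coe.1 (congrArg Subtype.val h)))
  · rintro ⟨⟨l⟩, hl : l.length = t⟩
    refine ⟨⟦fun x => l[x.val]'(hl ▸ x.val_lt)⟧, Subtype.ext ?_⟩
    show ((toList _ : List α) : Cycle α) = (l : Cycle α)
    congr 1
    refine List.ext_getElem (by simp [hl]) fun i _ hi => ?_
    simp [toList, ZMod.val_natCast, Nat.mod_eq_of_lt (hl ▸ hi : i < t)]

end Necklace

theorem Cycle.mul_card_length_eq_sum (α : Type*) [Fintype α] (t : ℕ) [NeZero t] :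
    t * Nat.card {c : Cycle α // c.length = t} =
      ∑ j ∈ Finset.Icc 1 t, Fintype.card α ^ Nat.gcd j t := by
  classical
  have burnside := sum_card_fixedBy_eq_card_orbits_mul_card_addGroup (ZMod t) (ZMod t → α)
  rw [ZMod.card] at burnside
  rw [← Nat.card_congr Necklace.orbitsEquivCycles, Nat.card_eq_fintype_card, mul_comm,
    ← burnside, ← ZMod.sum_comp_val_eq_sum_Icc t _ (by simp)]
  refine Finset.sum_congr rfl fun g _ => ?_
  have := card_arrowFixedBy_zmod (t := t) (B := α) g.val
  rw [ZMod.natCast_zmod_val, Nat.card_eq_fintype_card, Nat.card_eq_fintype_card] at this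
  rw [this, Nat.gcd_comm]

end Necklaces

theorem isConj_mul_comm {M : Type*} [Group M] (x y : M) : IsConj (x * y) (y * x) :=
  isConj_iff.2 ⟨y, by group⟩

namespace Z2Z3

open Monoid.Coprod

/-! ### Normal forms -/

abbrev Syllable : Type := {x : ZMod 3 // x ≠ 0}

def bpow (x : ZMod 3) : G := inr (Multiplicative.ofAdd x)

@[simp] theorem bpow_zero : bpow 0 = 1 := by simp [bpow]

theorem bpow_add (x y : ZMod 3) : bpow (x + y) = bpow x * bpow y := by
  simp [bpow, ← map_mul]

theorem bpow_one : bpow 1 = b := rfl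

theorem bpow_neg (x : ZMod 3) : bpow (-x) = (bpow x)⁻¹ := by
  simp [bpow, ← map_inv]

theorem bpow_eq_b_or_eq_b_inv {x : ZMod 3} (hx : x ≠ 0) : bpow x = b ∨ bpow x = b⁻¹ := by
  obtain rfl | rfl : x = 1 ∨ x = -1 := by revert x; decide
  · exact .inl rfl
  · exact .inr (bpow_neg 1)

@[simp] theorem a_mul_a : a * a = 1 := by
  rw [a, ← map_mul, ← ofAdd_add, show (1 + 1 : ZMod 2) = 0 from rfl, ofAdd_zero, map_one]

@[simp] theorem a_mul_a_mul (g : G) : a * (a * g) = g := by rw [← mul_assoc, a_mul_a, one_mul]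

theorem inl_eq_one_or_eq_a (m : Multiplicative (ZMod 2)) : inl m = (1 : G) ∨ inl m = a := by
  obtain rfl | rfl : m = 1 ∨ m = Multiplicative.ofAdd 1 := by revert m; decide
  · exact .inl (map_one _)
  · exact .inr rfl

theorem induction_on_generators {motive : G → Prop} (g : G) (one : motive 1)
    (a_mul : ∀ g, motive g → motive (a * g))
    (bpow_mul : ∀ x g, motive g → motive (bpow x * g)) : motive g := by
  induction g using Monoid.Coprod.induction_on' with
  | one => exact one
  | inl_mul m g hg => rcases inl_eq_one_or_eq_a m with h | h <;> rw [h] <;> simp [hg, a_mul]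
  | inr_mul m g hg => exact bpow_mul m.toAdd g hg

def word (l : List Syllable) : G := (l.map fun c => a * bpow c.1).prod

@[simp] theorem word_nil : word [] = 1 := rfl

@[simp] theorem word_cons (c : Syllable) (l : List Syllable) :
    word (c :: l) = a * bpow c * word l := by
  simp [word]

@[simp] theorem word_append (l l' : List Syllable) : word (l ++ l') = word l * word l' := by
  simp [word]

@[ext] structure NormalForm where
  head : ZMod 3
  body : List Syllable
  tail : Bool

namespace NormalForm

def eval : NormalForm → G
  | ⟨p, l, q⟩ => bpow p * word l * bif q then a else 1

def length : NormalForm → ℕ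
  | ⟨p, l, q⟩ => (if p = 0 then 0 else 1) + 2 * l.length + q.toNat

@[simp] theorem eval_word (l : List Syllable) : eval ⟨0, l, false⟩ = word l := by simp [eval]

theorem two_mul_length_body_le (n : NormalForm) : 2 * n.body.length ≤ n.length := by
  obtain ⟨p, l, q⟩ := n
  simp only [length]
  omega

def aMul : NormalForm → NormalForm
  | ⟨p, l, q⟩ =>
    if h : p = 0 then
      match l with
      | [] => ⟨0, [], !q⟩
      | c :: l => ⟨c, l, q⟩
    else ⟨0, ⟨p, h⟩ :: l, q⟩

def bpowMul (x : ZMod 3) : NormalForm → NormalForm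
  | ⟨p, l, q⟩ => ⟨x + p, l, q⟩

theorem aMul_aMul (n : NormalForm) : aMul (aMul n) = n := by
  obtain ⟨p, l, q⟩ := n
  by_cases hp : p = 0
  · subst hp
    cases l with
    | nil => simp [aMul]
    | cons c l => simp [aMul, c.2]
  · simp [aMul, hp]

theorem eval_aMul (n : NormalForm) : eval (aMul n) = a * eval n := by
  obtain ⟨p, l, q⟩ := n
  by_cases hp : p = 0
  · subst hp
    cases l with
    | nil => cases q <;> simp [aMul, eval]
    | cons c l => simp [aMul, eval, ← mul_assoc]
  · simp [aMul, eval, hp, mul_assoc]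

theorem eval_bpowMul (x : ZMod 3) (n : NormalForm) : eval (bpowMul x n) = bpow x * eval n := by
  obtain ⟨p, l, q⟩ := n
  simp only [bpowMul, eval, bpow_add, mul_assoc]

theorem length_aMul_le (n : NormalForm) : length (aMul n) ≤ length n + 1 := by
  obtain ⟨p, l, q⟩ := n
  by_cases hp : p = 0
  · subst hp
    cases l with
    | nil => cases q <;> simp [aMul, length]
    | cons c l => simp [aMul, length, c.2]; omega
  · simp [aMul, length, hp]; omega

theorem length_bpowMul_le (x : ZMod 3) (n : NormalForm) :
    length (bpowMul x n) ≤ length n + 1 := by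
  obtain ⟨p, l, q⟩ := n
  simp only [bpowMul, length]
  grind

def aHom : Multiplicative (ZMod 2) →* Function.End NormalForm where
  toFun m := if m = 1 then 1 else aMul
  map_one' := if_pos rfl
  map_mul' x y := by
    obtain rfl | rfl : x = 1 ∨ x = .ofAdd 1 := by revert x; decide
    · simp
    obtain rfl | rfl : y = 1 ∨ y = .ofAdd 1 := by revert y; decide
    · rfl
    · exact funext fun n => (aMul_aMul n).symm

def bpowHom : Multiplicative (ZMod 3) →* Function.End NormalForm where
  toFun x := bpowMul x.toAdd
  map_one' := funext fun n => by simp [bpowMul]; rfl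
  map_mul' x y := funext fun n => by simp [bpowMul, add_assoc]; rfl

/-- van der Waerden's trick: the orbit map `g ↦ g • one` inverts `eval`, so normal forms are
unique. -/
instance : MulAction G NormalForm := .ofEndHom (lift aHom bpowHom)

theorem a_smul (n : NormalForm) : a • n = aMul n := by
  show lift aHom bpowHom a n = _
  simp [a, aHom]

theorem bpow_smul (x : ZMod 3) (n : NormalForm) : bpow x • n = bpowMul x n := rfl

theorem eval_smul (g : G) (n : NormalForm) : eval (g • n) = g * eval n := by
  induction g using induction_on_generators generalizing n with
  | one => simp
  | a_mul g ih => rw [mul_smul, a_smul, eval_aMul, ih, mul_assoc]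
  | bpow_mul x g ih => rw [mul_smul, bpow_smul, eval_bpowMul, ih, mul_assoc]

def one : NormalForm := ⟨0, [], false⟩

def of (g : G) : NormalForm := g • one

theorem word_smul (l : List Syllable) (q : Bool) :
    word l • (⟨0, [], q⟩ : NormalForm) = ⟨0, l, q⟩ := by
  induction l with
  | nil => simp
  | cons c l ih => simp [mul_smul, ih, bpow_smul, a_smul, bpowMul, aMul, c.2]

@[simp] theorem of_eval (n : NormalForm) : of n.eval = n := by
  obtain ⟨p, l, q⟩ := n
  have hq : (bif q then a else 1) • one = ⟨0, [], q⟩ := by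
    cases q
    · rfl
    · simp [a_smul, aMul, one]
  simp [of, eval, mul_smul, hq, word_smul, bpow_smul, bpowMul]

@[simp] theorem eval_of (g : G) : (of g).eval = g := by
  rw [of, eval_smul]
  simp [one, eval]

theorem eval_injective : Function.Injective eval := Function.LeftInverse.injective of_eval

theorem of_eq_iff {g : G} {n : NormalForm} : of g = n ↔ g = n.eval :=
  ⟨fun h => by rw [← h, eval_of], fun h => by rw [h, of_eval]⟩

theorem of_word (l : List Syllable) : of (word l) = ⟨0, l, false⟩ := of_eq_iff.2 (eval_word l).symm

theorem of_a_mul (g : G) : of (a * g) = (of g).aMul := by rw [of, mul_smul, a_smul]; rfl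

theorem of_bpow_mul (x : ZMod 3) (g : G) : of (bpow x * g) = (of g).bpowMul x := by
  rw [of, mul_smul, bpow_smul]; rfl

def mulA : NormalForm → NormalForm
  | ⟨p, l, q⟩ => ⟨p, l, !q⟩

def mulBpow (x : ZMod 3) : NormalForm → NormalForm
  | ⟨p, l, q⟩ =>
    if hx : x = 0 then ⟨p, l, q⟩
    else bif q then ⟨p, l ++ [⟨x, hx⟩], false⟩
    else if hl : l = [] then ⟨p + x, [], false⟩
    else if hc : (l.getLast hl).1 + x = 0 then ⟨p, l.dropLast, true⟩
    else ⟨p, l.dropLast ++ [⟨(l.getLast hl).1 + x, hc⟩], false⟩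

@[simp] theorem mulBpow_zero (n : NormalForm) : mulBpow 0 n = n := by
  simp [mulBpow]

theorem mulBpow_true {x : ZMod 3} (hx : x ≠ 0) (p : ZMod 3) (l : List Syllable) :
    mulBpow x ⟨p, l, true⟩ = ⟨p, l ++ [⟨x, hx⟩], false⟩ := by
  simp [mulBpow, hx]

theorem mulBpow_nil {x : ZMod 3} (hx : x ≠ 0) (p : ZMod 3) :
    mulBpow x ⟨p, [], false⟩ = ⟨p + x, [], false⟩ := by
  simp [mulBpow, hx]

theorem mulBpow_concat {x : ZMod 3} (hx : x ≠ 0) (p : ZMod 3) (l : List Syllable)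
    (c : Syllable) : mulBpow x ⟨p, l ++ [c], false⟩ =
      if hc : c.1 + x = 0 then ⟨p, l, true⟩ else ⟨p, l ++ [⟨c.1 + x, hc⟩], false⟩ := by
  simp [mulBpow, hx]

theorem eval_mulA (n : NormalForm) : eval (mulA n) = eval n * a := by
  obtain ⟨p, l, q⟩ := n
  cases q <;> simp [mulA, eval, mul_assoc]

theorem eval_mulBpow (x : ZMod 3) (n : NormalForm) : eval (mulBpow x n) = eval n * bpow x := by
  obtain ⟨p, l, q⟩ := n
  by_cases hx : x = 0
  · simp [hx]
  cases q
  · rcases l.eq_nil_or_concat' with rfl | ⟨l, c, rfl⟩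
    · simp [mulBpow_nil hx, eval, bpow_add]
    · rw [mulBpow_concat hx]
      split_ifs with hc
      · simp [eval, mul_assoc, ← bpow_add, hc]
      · simp [eval, mul_assoc, ← bpow_add]
  · simp [mulBpow_true hx, eval, mul_assoc]

theorem of_mul_a (g : G) : of (g * a) = (of g).mulA := by
  rw [of_eq_iff, eval_mulA, eval_of]

theorem of_mul_bpow (g : G) (x : ZMod 3) : of (g * bpow x) = (of g).mulBpow x := by
  rw [of_eq_iff, eval_mulBpow, eval_of]

theorem mulBpow_mulBpow (x y : ZMod 3) (n : NormalForm) :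
    mulBpow y (mulBpow x n) = mulBpow (x + y) n :=
  eval_injective (by simp only [eval_mulBpow, bpow_add, mul_assoc])

theorem mulBpow_eq_bpowMul (x p : ZMod 3) (l : List Syllable) (q : Bool) :
    mulBpow x ⟨p, l, q⟩ = bpowMul p (mulBpow x ⟨0, l, q⟩) :=
  eval_injective (by rw [eval_mulBpow, eval_bpowMul, eval_mulBpow]; simp [eval, mul_assoc])

theorem length_mulBpow_le (x : ZMod 3) (n : NormalForm) :
    (mulBpow x n).length ≤ n.length + 1 := by
  obtain ⟨p, l, q⟩ := n
  by_cases hx : x = 0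
  · simp [hx]
  cases q
  · rcases l.eq_nil_or_concat' with rfl | ⟨l, c, rfl⟩
    · rw [mulBpow_nil hx]
      simp only [length]
      grind
    · rw [mulBpow_concat hx]
      split_ifs <;> simp [length]
  · rw [mulBpow_true hx]
    simp [length]
    grind

theorem head_mulBpow (x : ZMod 3) {p : ZMod 3} {l : List Syllable} {q : Bool}
    (h : l ≠ [] ∨ q) : (mulBpow x ⟨p, l, q⟩).head = p := by
  by_cases hx : x = 0
  · simp [hx]
  cases q
  · rcases l.eq_nil_or_concat' with rfl | ⟨l, c, rfl⟩
    · simp at h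
    · rw [mulBpow_concat hx]
      split_ifs <;> rfl
  · rw [mulBpow_true hx]

def spelling : NormalForm → List G
  | ⟨p, l, q⟩ => (if p = 0 then [] else [bpow p]) ++
      l.flatMap (fun c : Syllable => [a, bpow c.1]) ++ bif q then [a] else []

theorem prod_spelling (n : NormalForm) : n.spelling.prod = n.eval := by
  obtain ⟨p, l, q⟩ := n
  have hl : (l.flatMap fun c : Syllable => [a, bpow c.1]).prod = word l := by
    induction l with
    | nil => rfl
    | cons c l ih => simp only [List.flatMap_cons, List.prod_append, ih]; simp [mul_assoc]
  simp only [spelling, eval, List.prod_append, hl]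
  by_cases hp : p = 0 <;> cases q <;> simp [hp]

theorem length_spelling (n : NormalForm) : n.spelling.length = n.length := by
  obtain ⟨p, l, q⟩ := n
  have hl : (l.flatMap fun c : Syllable => [a, bpow c.1]).length = 2 * l.length := by
    induction l with
    | nil => rfl
    | cons c l ih => simp only [List.flatMap_cons, List.length_append, ih]; simp; ring
  simp only [spelling, length, List.length_append, hl]
  by_cases hp : p = 0 <;> cases q <;> simp [hp]

theorem mem_spelling {n : NormalForm} {x : G} (hx : x ∈ n.spelling) :
    x = a ∨ x = b ∨ x = b⁻¹ := by
  obtain ⟨p, l, q⟩ := n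
  simp only [spelling, List.mem_append, List.mem_flatMap] at hx
  rcases hx with (hx | ⟨c, -, hx⟩) | hx
  · split_ifs at hx with hp
    · simp at hx
    · exact .inr (List.mem_singleton.1 hx ▸ bpow_eq_b_or_eq_b_inv hp)
  · rcases List.mem_pair.1 hx with rfl | rfl
    · exact .inl rfl
    · exact .inr (bpow_eq_b_or_eq_b_inv c.2)
  · cases q <;> simp_all

theorem length_of_prod_le {l : List G} (hl : ∀ x ∈ l, x = a ∨ x = b ∨ x = b⁻¹) :
    (of l.prod).length ≤ l.length := by
  induction l with
  | nil => simp [of, one, length]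
  | cons s l ih =>
    have := ih fun x hx => hl x (List.mem_cons_of_mem s hx)
    rw [List.prod_cons, List.length_cons]
    rcases hl s List.mem_cons_self with rfl | rfl | rfl
    · grw [of_a_mul, length_aMul_le, this]
    · grw [← bpow_one, of_bpow_mul, length_bpowMul_le, this]
    · grw [← bpow_one, ← bpow_neg, of_bpow_mul, length_bpowMul_le, this]

end NormalForm

theorem wordLength_eq_length (g : G) : wordLength g = (NormalForm.of g).length := by
  have hmem : (NormalForm.of g).length ∈
      {n | ∃ l : List G, l.length = n ∧ (∀ x ∈ l, x = a ∨ x = b ∨ x = b⁻¹) ∧ l.prod = g} :=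
    ⟨_, NormalForm.length_spelling _, fun _ => NormalForm.mem_spelling,
      by rw [NormalForm.prod_spelling, NormalForm.eval_of]⟩
  refine le_antisymm (Nat.sInf_le hmem) (le_csInf ⟨_, hmem⟩ ?_)
  rintro _ ⟨l, rfl, hl, rfl⟩
  exact NormalForm.length_of_prod_le hl

theorem wordLength_word (l : List Syllable) : wordLength (word l) = 2 * l.length := by
  simp [wordLength_eq_length, NormalForm.of_word, NormalForm.length]

/-! ### Cyclic reduction -/

namespace NormalForm

/-- The first branch moves `b^p` from the front to the back, the second strips the outer letters
of `a b^c ⋯ a`; both are conjugations that do not lengthen the normal form. -/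
def cyclicReduction : NormalForm → NormalForm
  | ⟨p, l, q⟩ =>
    if p ≠ 0 ∧ (l ≠ [] ∨ q) then cyclicReduction (mulBpow p ⟨0, l, q⟩)
    else match l, q with
      | c :: l, true => cyclicReduction (mulBpow c.1 ⟨0, l, false⟩)
      | l, q => ⟨p, l, q⟩
termination_by n => 2 * n.length + if n.head = 0 then 0 else 1
decreasing_by
  · obtain ⟨hp, hlq⟩ := ‹p ≠ 0 ∧ (l ≠ [] ∨ q = true)›
    have := length_mulBpow_le p ⟨0, l, q⟩
    rw [head_mulBpow p hlq]
    simp only [length, if_pos, if_neg hp] at this ⊢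
    omega
  · have := length_mulBpow_le c ⟨0, l, false⟩
    have : (if (mulBpow c ⟨0, l, false⟩).head = 0 then 0 else 1) ≤ 1 := by split_ifs <;> omega
    simp only [length, if_pos, List.length_cons, Bool.toNat_true, Bool.toNat_false] at *
    omega

theorem cyclicReduction_eq_mulBpow {p : ZMod 3} {l : List Syllable} {q : Bool}
    (h : l ≠ [] ∨ q) : cyclicReduction ⟨p, l, q⟩ = cyclicReduction (mulBpow p ⟨0, l, q⟩) := by
  by_cases hp : p = 0
  · simp [hp]
  · rw [cyclicReduction.eq_def]
    exact if_pos ⟨hp, h⟩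

theorem cyclicReduction_cons_true (c : Syllable) (l : List Syllable) :
    cyclicReduction ⟨0, c :: l, true⟩ = cyclicReduction ⟨c, l, false⟩ := by
  rw [cyclicReduction.eq_1, if_neg (by simp)]
  by_cases hl : l = []
  · rw [hl, mulBpow_nil c.2, zero_add]
  · rw [cyclicReduction_eq_mulBpow (.inl hl)]

theorem cyclicReduction_word (l : List Syllable) :
    cyclicReduction ⟨0, l, false⟩ = ⟨0, l, false⟩ := by
  rw [cyclicReduction.eq_2 _ _ _ (by simp), if_neg (by simp)]

theorem isConj_eval_cyclicReduction (n : NormalForm) :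
    IsConj n.eval n.cyclicReduction.eval := by
  induction n using cyclicReduction.induct with
  | case1 p l q h ih =>
    rw [cyclicReduction_eq_mulBpow h.2]
    refine .trans ?_ ih
    rw [eval_mulBpow, show eval ⟨p, l, q⟩ = bpow p * eval ⟨0, l, q⟩ by simp [eval, mul_assoc]]
    exact isConj_mul_comm _ _
  | case2 p c l h ih =>
    rw [cyclicReduction.eq_1, if_neg h]
    refine .trans ?_ ih
    obtain rfl : p = 0 := by simpa using h
    rw [eval_mulBpow, eval_word,
      show eval ⟨0, c :: l, true⟩ = (a * bpow c) * (word l * a) by simp [eval, mul_assoc],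
      show word l * bpow c = (word l * a) * (a * bpow c) by simp [mul_assoc]]
    exact isConj_mul_comm _ _
  | case3 p l q h1 h2 =>
    rw [cyclicReduction.eq_2 _ _ _ h1, if_neg h2]

theorem length_cyclicReduction_le (n : NormalForm) : n.cyclicReduction.length ≤ n.length := by
  induction n using cyclicReduction.induct with
  | case1 p l q h ih =>
    rw [cyclicReduction_eq_mulBpow h.2]
    refine ih.trans ?_
    have := length_mulBpow_le p ⟨0, l, q⟩
    simp only [length, if_pos, if_neg h.1] at this ⊢
    omega
  | case2 p c l h ih =>
    rw [cyclicReduction.eq_1, if_neg h]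
    refine ih.trans ?_
    obtain rfl : p = 0 := by simpa using h
    have := length_mulBpow_le c ⟨0, l, false⟩
    simp only [length, if_pos, List.length_cons, Bool.toNat_true, Bool.toNat_false] at this ⊢
    omega
  | case3 p l q h1 h2 =>
    rw [cyclicReduction.eq_2 _ _ _ h1, if_neg h2]

theorem cyclicReduction_eq_word_or_length_le_one (n : NormalForm) :
    (∃ l, n.cyclicReduction = ⟨0, l, false⟩) ∨ n.cyclicReduction.length ≤ 1 := by
  induction n using cyclicReduction.induct with
  | case1 p l q h ih => rwa [cyclicReduction_eq_mulBpow h.2]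
  | case2 p c l h ih => rwa [cyclicReduction.eq_1, if_neg h]
  | case3 p l q h1 h2 =>
    rw [cyclicReduction.eq_2 _ _ _ h1, if_neg h2]
    rcases l with _ | ⟨c, l⟩
    · right
      cases q
      · simp only [length]
        split_ifs <;> simp
      · simp_all [length]
    · cases q
      · exact .inl ⟨c :: l, by simpa using h2⟩
      · exact (h1 c l rfl rfl).elim

theorem cyclicReduction_aMul (n : NormalForm) :
    ((aMul n).cyclicReduction.body : Cycle Syllable) = (mulA n).cyclicReduction.body := by
  obtain ⟨p, l, q⟩ := n
  by_cases hp : p = 0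
  · subst hp
    rcases l with _ | ⟨c, l⟩
    · rfl
    cases q
    · simp [aMul, mulA, cyclicReduction_cons_true]
    · simp only [aMul, mulA, dite_true, Bool.not_true]
      rw [cyclicReduction_eq_mulBpow (.inr rfl), mulBpow_true c.2, cyclicReduction_word,
        cyclicReduction_word]
      exact Cycle.coe_eq_coe.2 (List.isRotated_concat c l)
  · cases q
    · simp only [aMul, mulA, hp, dite_false, Bool.not_false]
      rw [cyclicReduction_eq_mulBpow (.inr rfl), mulBpow_true hp, cyclicReduction_word,
        cyclicReduction_word]
      exact Cycle.coe_eq_coe.2 (List.isRotated_concat _ l).symm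
    · simp [aMul, mulA, hp, cyclicReduction_cons_true]

-- Left and right multiplication commute, and the reduction first moves the head to the back.
theorem cyclicReduction_bpowMul (x : ZMod 3) (n : NormalForm) :
    (bpowMul x n).cyclicReduction = (mulBpow x n).cyclicReduction := by
  obtain ⟨p, l, q⟩ := n
  by_cases hlq : l ≠ [] ∨ q
  swap
  · obtain ⟨rfl, rfl⟩ : l = [] ∧ q = false := by simpa using hlq
    by_cases hx : x = 0
    · simp [hx, bpowMul]
    · rw [bpowMul, mulBpow_nil hx, add_comm]
  obtain ⟨l', q', hm⟩ : ∃ l' q', mulBpow x ⟨0, l, q⟩ = ⟨0, l', q'⟩ :=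
    ⟨_, _, NormalForm.ext (head_mulBpow x hlq) rfl rfl⟩
  have hlq' : l' ≠ [] ∨ q' := by
    by_contra! h
    obtain ⟨rfl, rfl⟩ : l' = [] ∧ q' = false := by simpa using h
    have h1 : (⟨0, l, q⟩ : NormalForm) = mulBpow (-x) ⟨0, [], false⟩ := by
      rw [← hm, mulBpow_mulBpow, add_neg_cancel, mulBpow_zero]
    by_cases hx : x = 0
    · simp_all
    · simp_all [mulBpow_nil (neg_ne_zero.2 hx)]
  rw [mulBpow_eq_bpowMul, hm, bpowMul, bpowMul, add_zero, cyclicReduction_eq_mulBpow hlq,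
    cyclicReduction_eq_mulBpow hlq', ← hm, mulBpow_mulBpow]

end NormalForm

/-! ### Conjugacy classes -/

def cyclicWord (g : G) : Cycle Syllable := (NormalForm.of g).cyclicReduction.body

theorem cyclicWord_word (l : List Syllable) : cyclicWord (word l) = l := by
  rw [cyclicWord, NormalForm.of_word, NormalForm.cyclicReduction_word]

theorem cyclicWord_a_mul (g : G) : cyclicWord (a * g) = cyclicWord (g * a) := by
  rw [cyclicWord, cyclicWord, NormalForm.of_a_mul, NormalForm.of_mul_a,
    NormalForm.cyclicReduction_aMul]

theorem cyclicWord_bpow_mul (x : ZMod 3) (g : G) :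
    cyclicWord (bpow x * g) = cyclicWord (g * bpow x) := by
  rw [cyclicWord, cyclicWord, NormalForm.of_bpow_mul, NormalForm.of_mul_bpow,
    NormalForm.cyclicReduction_bpowMul]

theorem cyclicWord_mul_comm (g h : G) : cyclicWord (g * h) = cyclicWord (h * g) := by
  induction h using induction_on_generators generalizing g with
  | one => simp
  | a_mul h ih => rw [← mul_assoc, ih, ← mul_assoc, ← cyclicWord_a_mul, mul_assoc]
  | bpow_mul x h ih => rw [← mul_assoc, ih, ← mul_assoc, ← cyclicWord_bpow_mul, mul_assoc]

theorem cyclicWord_eq_of_isConj {g h : G} (hc : IsConj g h) : cyclicWord g = cyclicWord h := by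
  obtain ⟨u, rfl⟩ := isConj_iff.1 hc
  rw [cyclicWord_mul_comm, ← mul_assoc, inv_mul_cancel, one_mul]

theorem isConj_word_of_isRotated {l l' : List Syllable} (h : l ~r l') :
    IsConj (word l) (word l') := by
  obtain ⟨k, rfl⟩ := h
  induction k with
  | zero => rw [List.rotate_zero]
  | succ k ih =>
    refine ih.trans ?_
    rw [← List.rotate_rotate]
    rcases l.rotate k with _ | ⟨c, l⟩
    · rfl
    · simpa using isConj_mul_comm (a * bpow c) (word l)

def wordClass : Cycle Syllable → ConjClasses G :=
  Quotient.lift (fun l => ConjClasses.mk (word l)) fun _ _ h =>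
    ConjClasses.mk_eq_mk_iff_isConj.2 (isConj_word_of_isRotated h)

theorem wordClass_injective : Function.Injective wordClass := by
  rintro ⟨l⟩ ⟨l'⟩ h
  have := cyclicWord_eq_of_isConj (ConjClasses.mk_eq_mk_iff_isConj.1 h)
  rwa [cyclicWord_word, cyclicWord_word] at this

theorem two_mul_length_le_wordLength {g : G} {l : List Syllable} (h : IsConj g (word l)) :
    2 * l.length ≤ wordLength g := by
  have hc := cyclicWord_eq_of_isConj h
  rw [cyclicWord_word, cyclicWord] at hc
  have hlen := congrArg Cycle.length hc
  simp only [Cycle.length_coe] at hlen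
  rw [wordLength_eq_length, ← hlen]
  exact (NormalForm.two_mul_length_body_le _).trans (NormalForm.length_cyclicReduction_le _)

theorem conjClassLength_mk_le {g h : G} (hc : IsConj g h) :
    conjClassLength (ConjClasses.mk g) ≤ wordLength h :=
  Nat.sInf_le ⟨h, ConjClasses.mk_eq_mk_iff_isConj.2 hc.symm, rfl⟩

theorem conjClassLength_mk_word (l : List Syllable) :
    conjClassLength (ConjClasses.mk (word l)) = 2 * l.length := by
  refine le_antisymm ((conjClassLength_mk_le (.refl _)).trans_eq (wordLength_word l))
    (le_csInf ⟨_, word l, rfl, wordLength_word l⟩ ?_)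
  rintro _ ⟨g, hg, rfl⟩
  exact two_mul_length_le_wordLength (ConjClasses.mk_eq_mk_iff_isConj.1 hg)

theorem conjClassLength_wordClass (c : Cycle Syllable) :
    conjClassLength (wordClass c) = 2 * c.length :=
  Quotient.inductionOn c conjClassLength_mk_word

theorem exists_wordClass_of_two_le_conjClassLength {C : ConjClasses G}
    (hC : 2 ≤ conjClassLength C) : ∃ c, C = wordClass c := by
  obtain ⟨g, rfl⟩ := ConjClasses.mk_surjective C
  have hconj := NormalForm.isConj_eval_cyclicReduction (NormalForm.of g)
  rw [NormalForm.eval_of] at hconj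
  rcases NormalForm.cyclicReduction_eq_word_or_length_le_one (NormalForm.of g) with ⟨l, hl⟩ | h
  · rw [hl, NormalForm.eval_word] at hconj
    exact ⟨l, ConjClasses.mk_eq_mk_iff_isConj.2 hconj⟩
  · have := (conjClassLength_mk_le hconj).trans_eq (wordLength_eq_length _)
    rw [NormalForm.of_eval] at this
    omega

def cyclesEquivConjClasses {t : ℕ} (ht : 0 < t) :
    {c : Cycle Syllable // c.length = t} ≃ {C : ConjClasses G | conjClassLength C = 2 * t} := by
  refine Equiv.ofBijective
    (fun c => ⟨wordClass c, (conjClassLength_wordClass c).trans (by rw [c.2])⟩)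
    ⟨fun c c' h => Subtype.ext (wordClass_injective (congrArg Subtype.val h)), ?_⟩
  rintro ⟨C, hC : conjClassLength C = 2 * t⟩
  obtain ⟨c, rfl⟩ := exists_wordClass_of_two_le_conjClassLength (C := C) (by omega)
  rw [conjClassLength_wordClass] at hC
  exact ⟨⟨c, by omega⟩, rfl⟩

end Z2Z3

/-- The number of conjugacy classes of `G = ℤ/2 * ℤ/3` of length
`2t` equals `(1/t) * ∑_{j=1}^t 2^(gcd(j,t))` (stated with both sides multiplied
by `t`). -/
theorem count_conjugacy_classes (t : ℕ) (ht : 0 < t) :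
    t * Nat.card {c : ConjClasses G | conjClassLength c = 2 * t} =
      ∑ j ∈ Finset.Icc 1 t, 2 ^ Nat.gcd j t := by
  have : NeZero t := ⟨ht.ne'⟩
  rw [← Nat.card_congr (Z2Z3.cyclesEquivConjClasses ht), Cycle.mul_card_length_eq_sum]
  rfl
end
end

section
/- For positive integers t and m ≥ 2, the number of compositions of t into parts each of size at most m equals the nearest integer to d_m · α_m^t, where α_m is the unique positive real root of z^m - z^{m-1} - ... - z - 1 = 0 and d_m = (α_m - 1) / (2 + (m+1)(α_m - 2)). -/
/-!
Shifted right by `m - 1` and padded with zeros, the counts `C t` form a solution `c` of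
`c (s + m) = c s + ⋯ + c (s + m - 1)` with initial values `0, …, 0, 1`, and so does the error
`e s = d α ^ s - α ^ (m - 1) c s`. Pairing a solution with the coefficients of
`(z ^ m - z ^ (m - 1) - ⋯ - 1) / (z - α)` gives a quantity that is multiplied by `α` at each step,
and `d` is precisely the constant for which it vanishes on `e`. Its vanishing turns the recurrence
into `2 e (s + m) = ∑ uᵢ e (s + m - i)` with `uᵢ = (2 - α) (1 + α + ⋯ + α ^ (i - 1)) ≥ 0`,
`u₀ = 0` and `∑ uᵢ ≤ 2`, so the bound `|e s| < α ^ (m - 1) / 2`, checked directly on the initial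
values, propagates to every `s`.
-/

open Finset

def boundedCompositions (m : ℕ) : ℕ → Finset (List ℕ)
  | 0 => {[]}
  | t + 1 => (range (min (t + 1) m)).biUnion fun i =>
      (boundedCompositions m (t - i)).image (List.cons (i + 1))

theorem mem_boundedCompositions {m t : ℕ} {l : List ℕ} :
    l ∈ boundedCompositions m t ↔ (∀ k ∈ l, 1 ≤ k ∧ k ≤ m) ∧ l.sum = t := by
  induction t using Nat.strong_induction_on generalizing l with
  | _ t ih =>
    rcases t with _ | t <;> rcases l with _ | ⟨k, l⟩
    · simp [boundedCompositions]
    · simp [boundedCompositions]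
      omega
    · simp [boundedCompositions]
    · simp only [boundedCompositions, mem_biUnion, mem_range, mem_image, List.cons.injEq,
        List.mem_cons, forall_eq_or_imp, List.sum_cons]
      constructor
      · rintro ⟨i, hi, l', hl', hk, rfl⟩
        rw [ih _ (by omega)] at hl'
        exact ⟨⟨⟨by omega, by omega⟩, hl'.1⟩, by omega⟩
      · rintro ⟨⟨⟨hk1, hkm⟩, hl⟩, hsum⟩
        exact ⟨k - 1, by omega, l, (ih _ (by omega)).2 ⟨hl, by omega⟩, by omega, rfl⟩

theorem card_boundedCompositions_succ (m t : ℕ) :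
    #(boundedCompositions m (t + 1)) =
      ∑ i ∈ range (min (t + 1) m), #(boundedCompositions m (t - i)) := by
  rw [boundedCompositions, card_biUnion]
  · exact sum_congr rfl fun i _ => card_image_of_injective _ List.cons_injective
  · intro i _ j _ hij
    simp only [Function.onFun, disjoint_left, mem_image]
    rintro _ ⟨l, _, rfl⟩ ⟨l', _, h⟩
    exact hij (by simp_all)

theorem natCard_setOf_boundedCompositions (m t : ℕ) :
    Nat.card {l : List ℕ | (∀ k ∈ l, 1 ≤ k ∧ k ≤ m) ∧ l.sum = t} =
      #(boundedCompositions m t) := by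
  have : {l : List ℕ | (∀ k ∈ l, 1 ≤ k ∧ k ≤ m) ∧ l.sum = t} = boundedCompositions m t := by
    ext l
    simp [mem_boundedCompositions]
  rw [this, Nat.card_coe_set_eq, Set.ncard_coe_finset]

theorem Finset.Nat.sum_antidiagonal_eq_sum_range_snd {M : Type*} [AddCommMonoid M]
    (f : ℕ → M) (n : ℕ) : ∑ p ∈ antidiagonal n, f p.2 = ∑ j ∈ range (n + 1), f j := by
  rw [← Finset.Nat.sum_antidiagonal_swap]
  exact Finset.Nat.sum_antidiagonal_eq_sum_range_succ (fun i _ => f i) n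

section Recurrence

variable {R : Type*} [CommRing R] {m : ℕ}

def IsBonacci (m : ℕ) (x : ℕ → R) : Prop :=
  ∀ s, x (s + m) = ∑ j ∈ range m, x (s + j)

namespace IsBonacci

variable {x y : ℕ → R}

theorem const_mul_sub_const_mul (hx : IsBonacci m x) (hy : IsBonacci m y) (a b : R) :
    IsBonacci m fun s => a * x s - b * y s := by
  intro s
  simp only [hx s, hy s, sum_sub_distrib, mul_sum]

theorem sum_range_succ_eq (hx : IsBonacci m x) (s : ℕ) :
    ∑ j ∈ range (m + 1), x (s + j) = 2 * x (s + m) := by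
  rw [sum_range_succ, ← hx s, two_mul]

theorem add_one_add (hx : IsBonacci m x) (s : ℕ) : x (s + 1 + m) = 2 * x (s + m) - x s := by
  rw [hx (s + 1), eq_sub_iff_add_eq, ← hx.sum_range_succ_eq s, sum_range_succ', add_zero]
  simp only [add_right_comm s 1, add_assoc]

end IsBonacci

theorem isBonacci_pow {α : R} (hroot : α ^ m = ∑ i ∈ range m, α ^ i) :
    IsBonacci m (α ^ ·) := by
  intro s
  simp only [pow_add, ← mul_sum, hroot]

theorem pow_mul_two_sub_eq_one {α : R} (hroot : α ^ m = ∑ i ∈ range m, α ^ i) :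
    α ^ m * (2 - α) = 1 := by
  linear_combination (geom_sum_mul α m).symm - (α - 1) * hroot

theorem pow_pred_mul_mul_two_sub_eq_one {α : R} (hm : m ≠ 0)
    (hroot : α ^ m = ∑ i ∈ range m, α ^ i) : α ^ (m - 1) * (α * (2 - α)) = 1 := by
  rw [← mul_assoc, ← pow_succ, Nat.sub_add_cancel (Nat.one_le_iff_ne_zero.mpr hm),
    pow_mul_two_sub_eq_one hroot]

def bonacciWeight (α : R) (i : ℕ) : R := α ^ i - ∑ k ∈ range i, α ^ k

@[simp]
theorem bonacciWeight_zero (α : R) : bonacciWeight α 0 = 1 := by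
  simp [bonacciWeight]

theorem bonacciWeight_succ (α : R) (i : ℕ) :
    bonacciWeight α (i + 1) = α * bonacciWeight α i - 1 := by
  simp only [bonacciWeight, sum_range_succ', pow_succ', ← mul_sum, pow_zero]
  ring

theorem one_sub_bonacciWeight (α : R) (i : ℕ) :
    1 - bonacciWeight α i = (2 - α) * ∑ k ∈ range i, α ^ k := by
  rw [bonacciWeight]
  linear_combination geom_sum_mul α i

theorem sub_one_mul_bonacciWeight (α : R) (i : ℕ) :
    (α - 1) * bonacciWeight α i = α ^ (i + 1) - 2 * α ^ i + 1 := by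
  rw [bonacciWeight]
  linear_combination -geom_sum_mul α i

/-- `bonacciWeight α i` is the coefficient of `z ^ (m - 1 - i)` in
`(z ^ m - z ^ (m - 1) - ⋯ - 1) / (z - α)` (and vanishes at `i = m` when `α` is a root). -/
def dominantPart (m : ℕ) (α : R) (x : ℕ → R) (s : ℕ) : R :=
  ∑ p ∈ antidiagonal m, bonacciWeight α p.1 * x (s + p.2)

theorem dominantPart_const_mul_sub_const_mul (α a b : R) (x y : ℕ → R) (s : ℕ) :
    dominantPart m α (fun s => a * x s - b * y s) s =
      a * dominantPart m α x s - b * dominantPart m α y s := by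
  simp only [dominantPart, mul_sum, ← sum_sub_distrib]
  exact sum_congr rfl fun _ _ => by ring

theorem dominantPart_succ {α : R} {x : ℕ → R} (hx : IsBonacci m x)
    (hroot : α ^ m = ∑ i ∈ range m, α ^ i) (s : ℕ) :
    dominantPart m α x (s + 1) = α * dominantPart m α x s := by
  have hwm : bonacciWeight α m = 0 := sub_eq_zero.mpr hroot
  -- peel the antidiagonal of `m + 1` at either end and compare
  have h := (Finset.Nat.sum_antidiagonal_succ (n := m)
    (f := fun p => bonacciWeight α p.1 * x (s + p.2))).symm.trans
    Finset.Nat.sum_antidiagonal_succ'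
  simp only [bonacciWeight_succ, hwm, bonacciWeight_zero, sub_mul, sum_sub_distrib, one_mul,
    mul_assoc, ← mul_sum, Finset.Nat.sum_antidiagonal_eq_sum_range_snd (fun j => x (s + j)),
    hx.sum_range_succ_eq, ← add_assoc] at h
  have hstep := hx.add_one_add s
  simp only [dominantPart, add_right_comm s 1, add_zero] at h hstep ⊢
  linear_combination h.symm + hstep

theorem dominantPart_eq_pow_mul {α : R} {x : ℕ → R} (hx : IsBonacci m x)
    (hroot : α ^ m = ∑ i ∈ range m, α ^ i) (s : ℕ) :
    dominantPart m α x s = α ^ s * dominantPart m α x 0 := by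
  induction s with
  | zero => rw [pow_zero, one_mul]
  | succ s ih => rw [dominantPart_succ hx hroot, ih, pow_succ', mul_assoc]

theorem sum_one_sub_bonacciWeight_mul {α : R} {x : ℕ → R} (hx : IsBonacci m x) (s : ℕ) :
    ∑ p ∈ antidiagonal m, (1 - bonacciWeight α p.1) * x (s + p.2) =
      2 * x (s + m) - dominantPart m α x s := by
  simp only [dominantPart, sub_mul, one_mul, sum_sub_distrib,
    Finset.Nat.sum_antidiagonal_eq_sum_range_snd (fun j => x (s + j)), hx.sum_range_succ_eq]

theorem sub_one_mul_dominantPart_pow {α : R} (hroot : α ^ m = ∑ i ∈ range m, α ^ i) :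
    (α - 1) * dominantPart m α (α ^ ·) 0 = α ^ m * (2 + (m + 1) * (α - 2)) := by
  have hterm : ∀ p ∈ antidiagonal m, (α - 1) * (bonacciWeight α p.1 * α ^ (0 + p.2)) =
      α ^ (m + 1) - 2 * α ^ m + α ^ p.2 := by
    intro p hp
    rw [← mem_antidiagonal.mp hp, ← mul_assoc, sub_one_mul_bonacciWeight]
    ring
  rw [dominantPart, mul_sum, sum_congr rfl hterm, sum_add_distrib,
    Finset.Nat.sum_antidiagonal_eq_sum_range_snd (α ^ ·), sum_range_succ, ← hroot, sum_const,
    Finset.Nat.card_antidiagonal, nsmul_eq_mul]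
  push_cast
  ring

theorem sub_one_mul_sum_one_sub_bonacciWeight {α : R} (hroot : α ^ m = ∑ i ∈ range m, α ^ i) :
    (α - 1) * ∑ i ∈ range (m + 1), (1 - bonacciWeight α i) = 2 + (m + 1) * (α - 2) := by
  have hterm : ∀ i ∈ range (m + 1), (α - 1) * (1 - bonacciWeight α i) = (2 - α) * (α ^ i - 1) := by
    intro i _
    rw [one_sub_bonacciWeight, mul_left_comm, mul_comm (α - 1), geom_sum_mul]
  rw [mul_sum, sum_congr rfl hterm, ← mul_sum, sum_sub_distrib, sum_range_succ, ← hroot,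
    sum_const, card_range, nsmul_eq_mul]
  push_cast
  linear_combination 2 * pow_mul_two_sub_eq_one hroot

end Recurrence

theorem abs_lt_of_two_mul_eq_sum_antidiagonal {m : ℕ} {x c : ℕ → ℝ} {B : ℝ}
    (hc : ∀ i, 0 ≤ c i) (hc0 : c 0 = 0) (hcm : 0 < c m) (hsum : ∑ i ∈ range (m + 1), c i ≤ 2)
    (hx : ∀ s, 2 * x (s + m) = ∑ p ∈ antidiagonal m, c p.1 * x (s + p.2))
    (hbase : ∀ s < m, |x s| < B) (s : ℕ) : |x s| < B := by
  have hm : 0 < m := Nat.pos_of_ne_zero fun h => by simp [h, hc0] at hcm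
  have hB : 0 ≤ B := (abs_nonneg _).trans (hbase 0 hm).le
  induction s using Nat.strong_induction_on with
  | _ s ih =>
    obtain hs | ⟨s, rfl⟩ : s < m ∨ ∃ s', s = s' + m :=
      (lt_or_ge s m).imp_right fun h => ⟨s - m, by omega⟩
    · exact hbase s hs
    have hle : ∀ p ∈ antidiagonal m, c p.1 * |x (s + p.2)| ≤ c p.1 * B := by
      intro p hp
      rcases Nat.eq_zero_or_pos p.1 with h0 | hpos
      · simp [h0, hc0]
      · have := mem_antidiagonal.mp hp
        exact mul_le_mul_of_nonneg_left (ih _ (by omega)).le (hc _)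
    have hlt : c m * |x (s + 0)| < c m * B := mul_lt_mul_of_pos_left (ih s (by omega)) hcm
    have : 2 * |x (s + m)| < 2 * B := calc
      2 * |x (s + m)| = |∑ p ∈ antidiagonal m, c p.1 * x (s + p.2)| := by
        rw [← hx, abs_mul, abs_two]
      _ ≤ ∑ p ∈ antidiagonal m, c p.1 * |x (s + p.2)| := by
        refine (abs_sum_le_sum_abs _ _).trans_eq (sum_congr rfl fun p _ => ?_)
        rw [abs_mul, abs_of_nonneg (hc _)]
      _ < ∑ p ∈ antidiagonal m, c p.1 * B := sum_lt_sum hle ⟨(m, 0), by simp, hlt⟩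
      _ = (∑ i ∈ range (m + 1), c i) * B := by
        rw [← sum_mul, Finset.Nat.sum_antidiagonal_eq_sum_range_succ (fun i _ => c i)]
      _ ≤ 2 * B := mul_le_mul_of_nonneg_right hsum hB
    linarith

section Root

variable {m : ℕ} {α : ℝ}

theorem one_lt_of_pow_eq_geom_sum (hm : 2 ≤ m) (hα : 0 < α)
    (hroot : α ^ m = ∑ i ∈ range m, α ^ i) : 1 < α := by
  by_contra! h
  have hle : ∀ i ∈ range m, α ^ m ≤ α ^ i := fun i hi =>
    pow_le_pow_of_le_one hα.le h (mem_range.mp hi).le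
  have := card_nsmul_le_sum _ _ _ hle
  rw [← hroot, card_range, nsmul_eq_mul] at this
  have : (2 : ℝ) ≤ m := by exact_mod_cast hm
  nlinarith [pow_pos hα m]

theorem lt_two_of_pow_eq_geom_sum (hα : 0 < α) (hroot : α ^ m = ∑ i ∈ range m, α ^ i) :
    α < 2 := by
  nlinarith [pow_mul_two_sub_eq_one hroot, pow_pos hα m]

theorem three_halves_lt_of_pow_eq_geom_sum (hm : 2 ≤ m) (hα : 0 < α)
    (hroot : α ^ m = ∑ i ∈ range m, α ^ i) : 3 / 2 < α := by
  by_contra! h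
  have h1 := one_lt_of_pow_eq_geom_sum hm hα hroot
  have hsq : α ^ 2 ≤ α ^ m := pow_le_pow_right₀ h1.le hm
  nlinarith [pow_mul_two_sub_eq_one hroot, mul_pos (sub_pos.mpr h1) (sub_pos.mpr h1)]

theorem succ_lt_two_mul_pow_pred (hm : 2 ≤ m) (hα : 0 < α)
    (hroot : α ^ m = ∑ i ∈ range m, α ^ i) : (m + 1 : ℝ) < 2 * α ^ (m - 1) := by
  have hα32 := three_halves_lt_of_pow_eq_geom_sum hm hα hroot
  have hbern := one_add_mul_le_pow (a := α - 1) (by linarith) (m - 1)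
  rw [add_sub_cancel, Nat.cast_sub (by omega : 1 ≤ m), Nat.cast_one] at hbern
  have : (2 : ℝ) ≤ m := by exact_mod_cast hm
  nlinarith

noncomputable def bonacciConst (m : ℕ) (α : ℝ) : ℝ := (α - 1) / (2 + (m + 1) * (α - 2))

theorem bonacciConst_denom_pos (hm : 2 ≤ m) (hα : 0 < α)
    (hroot : α ^ m = ∑ i ∈ range m, α ^ i) : 0 < 2 + (m + 1) * (α - 2) := by
  have h1 := one_lt_of_pow_eq_geom_sum hm hα hroot
  have h2 := lt_two_of_pow_eq_geom_sum hα hroot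
  have hsucc := succ_lt_two_mul_pow_pred hm hα hroot
  have hpow := pow_pred_mul_mul_two_sub_eq_one (by omega : m ≠ 0) hroot
  nlinarith [mul_lt_mul_of_pos_right hsucc (sub_pos.mpr h2), pow_pos hα (m - 1)]

theorem half_lt_bonacciConst (hm : 2 ≤ m) (hα : 0 < α)
    (hroot : α ^ m = ∑ i ∈ range m, α ^ i) : 1 / 2 < bonacciConst m α := by
  have hm' : (2 : ℝ) ≤ m := by exact_mod_cast hm
  rw [bonacciConst, lt_div_iff₀ (bonacciConst_denom_pos hm hα hroot)]
  nlinarith [lt_two_of_pow_eq_geom_sum hα hroot]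

theorem bonacciConst_lt_half_mul (hm : 2 ≤ m) (hα : 0 < α)
    (hroot : α ^ m = ∑ i ∈ range m, α ^ i) : bonacciConst m α < α / 2 := by
  have hsucc := succ_lt_two_mul_pow_pred hm hα hroot
  have hpow := pow_pred_mul_mul_two_sub_eq_one (by omega : m ≠ 0) hroot
  rw [bonacciConst, div_lt_iff₀ (bonacciConst_denom_pos hm hα hroot)]
  have h2 := lt_two_of_pow_eq_geom_sum hα hroot
  nlinarith [mul_lt_mul_of_pos_right hsucc (mul_pos hα (sub_pos.mpr h2)), pow_pos hα (m - 1)]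

end Root

/-- The padding makes the recurrence hold from `s = 0` on. -/
noncomputable def paddedCount (m s : ℕ) : ℝ :=
  if m - 1 ≤ s then #(boundedCompositions m (s - (m - 1))) else 0

theorem paddedCount_add_pred (m t : ℕ) :
    paddedCount m (t + (m - 1)) = #(boundedCompositions m t) := by
  simp [paddedCount]

theorem paddedCount_of_lt {m s : ℕ} (hs : s < m - 1) : paddedCount m s = 0 :=
  if_neg (by omega)

theorem paddedCount_pred (m : ℕ) : paddedCount m (m - 1) = 1 := by
  simpa [boundedCompositions] using paddedCount_add_pred m 0

theorem paddedCount_self {m : ℕ} (hm : 1 ≤ m) : paddedCount m m = 1 := by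
  simpa [Nat.add_sub_cancel' hm, boundedCompositions, min_eq_left hm]
    using paddedCount_add_pred m 1

theorem isBonacci_paddedCount {m : ℕ} (hm : 1 ≤ m) : IsBonacci m (paddedCount m) := by
  intro s
  have hterm : ∀ i ∈ range m, paddedCount m (s + (m - 1 - i)) =
      if i ≤ s then (#(boundedCompositions m (s - i)) : ℝ) else 0 := by
    intro i hi
    have := mem_range.mp hi
    unfold paddedCount
    split_ifs <;> first | omega | rfl | (congr 3; omega)
  have hfilter : (range m).filter (· ≤ s) = range (min (s + 1) m) := by
    ext i
    simp only [mem_filter, mem_range]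
    omega
  rw [← sum_range_reflect, sum_congr rfl hterm, ← sum_filter, hfilter,
    show s + m = (s + 1) + (m - 1) by omega, paddedCount_add_pred, card_boundedCompositions_succ]
  push_cast
  rfl

theorem dominantPart_paddedCount {m : ℕ} (hm : 1 ≤ m) (α : ℝ) :
    dominantPart m α (paddedCount m) 0 = α := by
  rw [dominantPart, sum_eq_add_of_mem (0, m) (1, m - 1) (by simp) (by simp; omega) (by simp)]
  · simp [paddedCount_self hm, paddedCount_pred, bonacciWeight]
  · rintro ⟨i, j⟩ hij hne
    rw [HasAntidiagonal.mem_antidiagonal] at hij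
    rw [paddedCount_of_lt (by grind), mul_zero]

section Error

variable {m : ℕ} {α : ℝ}

noncomputable def compositionError (m : ℕ) (α : ℝ) (s : ℕ) : ℝ :=
  bonacciConst m α * α ^ s - α ^ (m - 1) * paddedCount m s

theorem isBonacci_compositionError (hm : 1 ≤ m) (hroot : α ^ m = ∑ i ∈ range m, α ^ i) :
    IsBonacci m (compositionError m α) :=
  (isBonacci_pow hroot).const_mul_sub_const_mul (isBonacci_paddedCount hm) _ _

theorem dominantPart_compositionError (hm : 2 ≤ m) (hα : 0 < α)
    (hroot : α ^ m = ∑ i ∈ range m, α ^ i) (s : ℕ) :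
    dominantPart m α (compositionError m α) s = 0 := by
  rw [dominantPart_eq_pow_mul (isBonacci_compositionError (by omega) hroot) hroot]
  have hD := (bonacciConst_denom_pos hm hα hroot).ne'
  have hα1 := (sub_pos.mpr (one_lt_of_pow_eq_geom_sum hm hα hroot)).ne'
  have hgeom := sub_one_mul_dominantPart_pow hroot
  have hpow : α ^ (m - 1) * α = α ^ m := by rw [← pow_succ, Nat.sub_add_cancel (by omega)]
  unfold compositionError
  rw [dominantPart_const_mul_sub_const_mul, dominantPart_paddedCount (by omega), bonacciConst,
    div_mul_eq_mul_div, hgeom, mul_div_assoc, div_self hD, mul_one, hpow, sub_self, mul_zero]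

theorem abs_compositionError_lt (hm : 2 ≤ m) (hα : 0 < α)
    (hroot : α ^ m = ∑ i ∈ range m, α ^ i) {s : ℕ} (hs : s < m) :
    |compositionError m α s| < α ^ (m - 1) / 2 := by
  have hd := half_lt_bonacciConst hm hα hroot
  have hd' := bonacciConst_lt_half_mul hm hα hroot
  have h2 := lt_two_of_pow_eq_geom_sum hα hroot
  rcases Nat.lt_or_ge s (m - 1) with hs | hs
  · have hpow : α ^ (s + 1) ≤ α ^ (m - 1) :=
      pow_le_pow_right₀ (one_lt_of_pow_eq_geom_sum hm hα hroot).le hs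
    rw [compositionError, paddedCount_of_lt hs, mul_zero, sub_zero,
      abs_of_pos (mul_pos (by linarith) (pow_pos hα s))]
    rw [pow_succ] at hpow
    nlinarith [pow_pos hα s]
  · obtain rfl : s = m - 1 := by omega
    rw [compositionError, paddedCount_pred, mul_one, ← sub_one_mul, abs_mul, abs_of_pos (pow_pos hα _)]
    have : |bonacciConst m α - 1| < 1 / 2 := abs_lt.mpr ⟨by linarith, by linarith⟩
    nlinarith [pow_pos hα (m - 1)]

theorem abs_bonacciConst_mul_pow_sub_card_lt (hm : 2 ≤ m) (hα : 0 < α)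
    (hroot : α ^ m = ∑ i ∈ range m, α ^ i) (t : ℕ) :
    |bonacciConst m α * α ^ t - #(boundedCompositions m t)| < 1 / 2 := by
  have h1 := one_lt_of_pow_eq_geom_sum hm hα hroot
  have h2 := lt_two_of_pow_eq_geom_sum hα hroot
  have hcoeff : ∀ i, 0 ≤ 1 - bonacciWeight α i := fun i => by
    rw [one_sub_bonacciWeight]
    exact mul_nonneg (by linarith) (sum_nonneg fun k _ => pow_nonneg hα.le k)
  have hcoeff_sum : ∑ i ∈ range (m + 1), (1 - bonacciWeight α i) ≤ 2 := by
    have hsum := sub_one_mul_sum_one_sub_bonacciWeight hroot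
    have : (2 : ℝ) ≤ m := by exact_mod_cast hm
    nlinarith
  have hbound := abs_lt_of_two_mul_eq_sum_antidiagonal hcoeff (by simp)
    (by rw [bonacciWeight, hroot, sub_self, sub_zero]; exact one_pos) hcoeff_sum
    (fun s => by rw [sum_one_sub_bonacciWeight_mul (isBonacci_compositionError (by omega) hroot),
      dominantPart_compositionError hm hα hroot, sub_zero])
    (fun s hs => abs_compositionError_lt hm hα hroot hs) (t + (m - 1))
  have hscale : compositionError m α (t + (m - 1)) =
      α ^ (m - 1) * (bonacciConst m α * α ^ t - #(boundedCompositions m t)) := by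
    rw [compositionError, paddedCount_add_pred, pow_add]
    ring
  rw [hscale, abs_mul, abs_of_pos (pow_pos hα _)] at hbound
  nlinarith [pow_pos hα (m - 1)]

end Error

theorem count_bounded_compositions_general (t m : ℕ) (hm : 2 ≤ m)
    (α : ℝ) (hα : 0 < α) (hroot : α ^ m = ∑ i ∈ Finset.range m, α ^ i) :
    (Nat.card {l : List ℕ | (∀ k ∈ l, 1 ≤ k ∧ k ≤ m) ∧ l.sum = t} : ℤ) =
      ⌊(α - 1) / (2 + (m + 1) * (α - 2)) * α ^ t + 1 / 2⌋ := by
  have h := abs_lt.mp (abs_bonacciConst_mul_pow_sub_card_lt hm hα hroot t)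
  unfold bonacciConst at h
  rw [natCard_setOf_boundedCompositions, ← round_eq, eq_comm, round_eq_iff]
  push_cast
  constructor <;> linarith

/-- For positive integers `t` and `m ≥ 2`, the number of
compositions of `t` into parts of size at most `m` equals the nearest integer
`⌊d_m · α_m^t + 1/2⌋`, where `α_m` is the (unique) positive real root of
`z^m = z^{m-1} + ⋯ + z + 1` and `d_m = (α_m - 1)/(2 + (m+1)(α_m - 2))`. -/
theorem count_bounded_compositions (t m : ℕ) (ht : 0 < t) (hm : 2 ≤ m)
    (α : ℝ) (hα : 0 < α) (hroot : α ^ m = ∑ i ∈ Finset.range m, α ^ i) :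
    (Nat.card {l : List ℕ | (∀ k ∈ l, 1 ≤ k ∧ k ≤ m) ∧ l.sum = t} : ℤ) =
      ⌊(α - 1) / (2 + (m + 1) * (α - 2)) * α ^ t + 1 / 2⌋ :=
  count_bounded_compositions_general t m hm α hα hroot
end
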